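/- arXiv:math/0701313 — 9 statements merged into one kernel-verified Lean document; each statement's English description precedes it below -/
import Mathlib

section
/- Let F be a field, V an F-vector space, G a finite subgroup of GL(V), and B a finite collection of subspaces of V such that V ∈ B, the image of any X ∈ B under any g ∈ G lies in B, and B is closed under pairwise intersection. Then the set M(G,B) of partial linear isomorphisms is finite, and its cardinality equals Σ_{X ∈ B} [G : G_X], where G_X := {g ∈ G : g v = v for all v ∈ X} is the pointwise isotropy subgroup of X and [G : G_X] is its index in G. -/
/-- The set `M(G,B)` of partial linear isomorphisms `g|_X` for `g ∈ G`, `X ∈ B`: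
`g|_X` is the partial linear map with domain `X` agreeing with `g` there. -/
def MGB {F V : Type*} [Field F] [AddCommGroup V] [Module F V]
    (G : Set (V ≃ₗ[F] V)) (B : Set (Submodule F V)) : Set (V →ₗ.[F] V) :=
  {p | ∃ g ∈ G, ∃ X ∈ B, p = (g : V →ₗ[F] V).toPMap X}

/-- The pointwise isotropy subgroup `G_X = {g ∈ G : g v = v for all v ∈ X}`,
as a subgroup of `G`. -/
def isotropy {F V : Type*} [Field F] [AddCommGroup V] [Module F V]
    (G : Subgroup (V ≃ₗ[F] V)) (X : Submodule F V) : Subgroup G where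
  carrier := {g | ∀ v ∈ X, (g : V ≃ₗ[F] V) v = v}
  one_mem' := fun v _ => rfl
  mul_mem' := by
    intro a b ha hb v hv
    have : ((a * b : G) : V ≃ₗ[F] V) v = (a : V ≃ₗ[F] V) ((b : V ≃ₗ[F] V) v) := rfl
    rw [this, hb v hv, ha v hv]
  inv_mem' := by
    intro a ha v hv
    have h1 : (a : V ≃ₗ[F] V) v = v := ha v hv
    have : ((a⁻¹ : G) : V ≃ₗ[F] V) ((a : V ≃ₗ[F] V) v) = v := by
      have : ((a⁻¹ : G) : V ≃ₗ[F] V) = ((a : V ≃ₗ[F] V))⁻¹ := rfl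
      rw [this]
      exact (a : V ≃ₗ[F] V).symm_apply_apply v
    rw [h1] at this
    exact this

lemma toPMap_eq_iff {F V : Type*} [Field F] [AddCommGroup V] [Module F V]
    (a b : V ≃ₗ[F] V) (X : Submodule F V) :
    (a : V →ₗ[F] V).toPMap X = (b : V →ₗ[F] V).toPMap X ↔ ∀ v ∈ X, a v = b v := by
  constructor
  · intro h v hv
    obtain ⟨hd, hf⟩ := LinearPMap.ext_iff.mp h
    have := hf (x := v) (hf := hv) (hg := hv)
    simpa [LinearMap.toPMap_apply] using this
  · intro h
    refine LinearPMap.ext rfl ?_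
    intro x y hxy
    exact h x y

/-- If `G` is a finite subgroup of `GL(V)` and `B` is a finite
system of subspaces for `G` (contains `V`, stable under `G`, closed under
intersections), then `M(G,B)` is finite of cardinality `∑_{X ∈ B} [G : G_X]`. -/
theorem order_of_MGB {F V : Type*} [Field F] [AddCommGroup V] [Module F V]
    (G : Subgroup (V ≃ₗ[F] V)) [Finite G]
    (B : Finset (Submodule F V))
    (hV : (⊤ : Submodule F V) ∈ B)
    (hmap : ∀ X ∈ B, ∀ g ∈ G, X.map (g : V →ₗ[F] V) ∈ B)
    (hinf : ∀ X ∈ B, ∀ Y ∈ B, X ⊓ Y ∈ B) :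
    (MGB (G : Set (V ≃ₗ[F] V)) (↑B : Set (Submodule F V))).Finite ∧
      Nat.card (MGB (G : Set (V ≃ₗ[F] V)) (↑B : Set (Submodule F V))) =
        ∑ X ∈ B, (isotropy G X).index := by
  classical
  set f : Submodule F V → G → (V →ₗ.[F] V) :=
    fun X g => ((g : V ≃ₗ[F] V) : V →ₗ[F] V).toPMap X with hf
  have hfin : ∀ X, (Set.range (f X)).Finite := fun X => Set.finite_range _
  set T : Submodule F V → Finset (V →ₗ.[F] V) := fun X => (hfin X).toFinset with hT
  -- MGB equals the coercion of the Finset biUnion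
  have hset : MGB (G : Set (V ≃ₗ[F] V)) (↑B : Set (Submodule F V)) = ↑(B.biUnion T) := by
    ext p
    simp only [MGB, Set.mem_setOf_eq, Finset.coe_biUnion, Set.mem_iUnion, Finset.mem_coe,
      hT, Set.Finite.mem_toFinset, Set.mem_range]
    constructor
    · rintro ⟨g, hg, X, hX, rfl⟩
      exact ⟨X, hX, ⟨g, hg⟩, rfl⟩
    · rintro ⟨X, hX, g, rfl⟩
      exact ⟨g, g.2, X, hX, rfl⟩
  -- domains
  have hdom : ∀ X (g : G), (f X g).domain = X := fun X g => rfl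
  -- disjointness
  have hdisj : ∀ X ∈ B, ∀ Y ∈ B, X ≠ Y → Disjoint (T X) (T Y) := by
    intro X _ Y _ hXY
    rw [Finset.disjoint_left]
    intro p hp hq
    rw [hT, Set.Finite.mem_toFinset, Set.mem_range] at hp hq
    obtain ⟨g, rfl⟩ := hp
    obtain ⟨h, hh⟩ := hq
    exact hXY (by rw [← hdom X g, ← hh, hdom Y h])
  -- cardinality of each piece
  have hcard : ∀ X, (T X).card = (isotropy G X).index := by
    intro X
    have hker : QuotientGroup.leftRel (isotropy G X) = Setoid.ker (f X) := by
      apply Setoid.ext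
      intro a b
      rw [QuotientGroup.leftRel_apply]
      constructor
      · intro h
        refine (toPMap_eq_iff _ _ X).mpr fun v hv => ?_
        have := h v hv
        have h2 : ((a⁻¹ * b : G) : V ≃ₗ[F] V) v = (a : V ≃ₗ[F] V).symm ((b : V ≃ₗ[F] V) v) := rfl
        rw [h2] at this
        exact ((a : V ≃ₗ[F] V).symm_apply_eq.mp this).symm
      · intro h v hv
        have := (toPMap_eq_iff _ _ X).mp h v hv
        have h2 : ((a⁻¹ * b : G) : V ≃ₗ[F] V) v = (a : V ≃ₗ[F] V).symm ((b : V ≃ₗ[F] V) v) := rfl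
        rw [h2, ← this]
        exact (a : V ≃ₗ[F] V).symm_apply_apply v
    have e : (G ⧸ isotropy G X) ≃ Set.range (f X) :=
      (Quotient.congrRight (fun a b => by rw [hker])).trans (Setoid.quotientKerEquivRange (f X))
    have h1 : (isotropy G X).index = Nat.card (Set.range (f X)) := Nat.card_congr e
    rw [h1, Nat.card_coe_set_eq, Set.ncard_eq_toFinset_card _ (hfin X)]
  constructor
  · rw [hset]; exact (B.biUnion T).finite_toSet
  · rw [hset, Nat.card_coe_set_eq, Set.ncard_coe_finset, Finset.card_biUnion hdisj]
    exact Finset.sum_congr rfl fun X _ => hcard X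
end

section
/- Let n ≥ 1. The Boolean reflection monoid of type A, namely the set M(W(A_{n−1}), B) of partial linear isomorphisms, has cardinality Σ_{k=0}^{n} (n choose k)^2 · k!. -/
/-- The coordinate subspace `X_S = {v : v i = 0 for i ∈ S}`. -/
def coordSubspace {n : ℕ} (S : Set (Fin n)) : Submodule ℝ (Fin n → ℝ) where
  carrier := {v | ∀ i ∈ S, v i = 0}
  add_mem' := by
    intro a b ha hb i hi
    simp [ha i hi, hb i hi]
  zero_mem' := fun i _ => rfl
  smul_mem' := by
    intro c v hv i hi
    simp [hv i hi]

/-- The Boolean system: all coordinate subspaces `X_S`, `S ⊆ Fin n`. -/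
def booleanSystem (n : ℕ) : Set (Submodule ℝ (Fin n → ℝ)) :=
  {X | ∃ S : Set (Fin n), X = coordSubspace S}

/-- The Weyl group of type `A_{n-1}`: the permutation maps
`(P_σ v) i = v (σ⁻¹ i)`. -/
def weylA (n : ℕ) : Set ((Fin n → ℝ) ≃ₗ[ℝ] (Fin n → ℝ)) :=
  {g | ∃ σ : Equiv.Perm (Fin n), ∀ (v : Fin n → ℝ) (i : Fin n), g v i = v (σ⁻¹ i)}


open Function

noncomputable def permLE {n : ℕ} (σ : Equiv.Perm (Fin n)) :
    (Fin n → ℝ) ≃ₗ[ℝ] (Fin n → ℝ) :=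
  LinearEquiv.funCongrLeft ℝ ℝ (σ⁻¹ : Equiv.Perm (Fin n))

@[simp] lemma permLE_apply {n : ℕ} (σ : Equiv.Perm (Fin n)) (v : Fin n → ℝ) (i : Fin n) :
    permLE σ v i = v (σ⁻¹ i) := rfl

lemma permLE_mem_weylA {n : ℕ} (σ : Equiv.Perm (Fin n)) : permLE σ ∈ weylA n :=
  ⟨σ, fun _ _ => rfl⟩

lemma exists_perm_extend {n : ℕ} (T : Finset (Fin n)) (f : {x // x ∈ T} ↪ Fin n) :
    ∃ σ : Equiv.Perm (Fin n), ∀ i (h : i ∈ T), σ i = f ⟨i, h⟩ := by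
  classical
  have hcard : Fintype.card {x // x ∈ T} = Fintype.card {x // x ∈ Set.range f} := by
    rw [← Nat.card_eq_fintype_card, ← Nat.card_eq_fintype_card,
      Nat.card_range_of_injective f.injective]
  have hcompl : Fintype.card {x // ¬ x ∈ T} = Fintype.card {x // ¬ x ∈ Set.range f} :=
    Fintype.card_compl_eq_card_compl _ _ hcard
  let e1 : {x // x ∈ T} ≃ {x // x ∈ Set.range f} := Equiv.ofInjective f f.injective
  let e2 : {x // ¬ x ∈ T} ≃ {x // ¬ x ∈ Set.range f} := Fintype.equivOfCardEq hcompl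
  refine ⟨Equiv.subtypeCongr e1 e2, fun i h => ?_⟩
  have : (Equiv.subtypeCongr e1 e2) i = e1 ⟨i, h⟩ := by
    simp [Equiv.subtypeCongr, h]
  simpa [e1] using this

lemma mem_coordSubspace {n : ℕ} {S : Set (Fin n)} {v : Fin n → ℝ} :
    v ∈ coordSubspace S ↔ ∀ i ∈ S, v i = 0 := Iff.rfl

lemma single_mem_coordSubspace {n : ℕ} {S : Set (Fin n)} {i : Fin n} :
    Pi.single i (1:ℝ) ∈ coordSubspace S ↔ i ∉ S := by
  constructor
  · intro h hi
    have := h i hi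
    simp at this
  · intro hi j hj
    exact Pi.single_eq_of_ne (by rintro rfl; exact hi hj) 1

lemma coordSubspace_injective {n : ℕ} : Function.Injective (coordSubspace (n := n)) := by
  intro S S' h
  ext i
  have := single_mem_coordSubspace (n := n) (S := S) (i := i)
  rw [h, single_mem_coordSubspace] at this
  tauto

lemma permLE_single {n : ℕ} (σ : Equiv.Perm (Fin n)) (i : Fin n) :
    permLE σ (Pi.single i 1) = Pi.single (σ i) (1:ℝ) := by
  funext j
  rw [permLE_apply]
  rcases eq_or_ne j (σ i) with rfl | hj
  · rw [show σ⁻¹ (σ i) = i from σ.symm_apply_apply i, Pi.single_eq_same, Pi.single_eq_same]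
  · rw [Pi.single_eq_of_ne hj, Pi.single_eq_of_ne]
    intro e
    exact hj (by rw [← e]; simp)

lemma toPMap_eq_of_agree {n : ℕ} (T : Finset (Fin n)) (σ τ : Equiv.Perm (Fin n))
    (h : ∀ i ∈ T, σ i = τ i) :
    ((permLE σ : (Fin n → ℝ) →ₗ[ℝ] (Fin n → ℝ)).toPMap (coordSubspace ((↑T : Set (Fin n))ᶜ))) =
    ((permLE τ : (Fin n → ℝ) →ₗ[ℝ] (Fin n → ℝ)).toPMap (coordSubspace ((↑T : Set (Fin n))ᶜ))) := by
  refine LinearPMap.ext rfl ?_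
  intro v hv hw
  show permLE σ v = permLE τ v
  funext i
  simp only [permLE_apply]
  by_cases hs : σ⁻¹ i ∈ T
  · have : τ (σ⁻¹ i) = i := by rw [← h _ hs]; simp [Equiv.apply_symm_apply]
    rw [show τ⁻¹ i = σ⁻¹ i from Equiv.Perm.inv_eq_iff_eq.mpr this.symm]
  · have ht : τ⁻¹ i ∉ T := by
      intro ht
      apply hs
      have : σ (τ⁻¹ i) = i := by rw [h _ ht]; simp [Equiv.apply_symm_apply]
      rw [show σ⁻¹ i = τ⁻¹ i from Equiv.Perm.inv_eq_iff_eq.mpr this.symm]; exact ht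
    rw [hv _ (by simpa using hs), hw _ (by simpa using ht)]

lemma LinearPMap.apply_congr {R E F : Type*} [Ring R] [AddCommGroup E] [Module R E]
    [AddCommGroup F] [Module R F] {p q : E →ₗ.[R] F} (h : p = q)
    (x : p.domain) (y : q.domain) (hxy : (x : E) = y) : p x = q y := by
  subst h
  cases Subtype.ext hxy
  rfl

/-- The Boolean reflection monoid of type `A_{n-1}` has order
`∑_{k=0}^n (n choose k)² k!`. -/
theorem card_boolean_monoid_A (n : ℕ) (hn : 1 ≤ n) :
    Nat.card (MGB (weylA n) (booleanSystem n)) =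
      ∑ k ∈ Finset.range (n + 1), (n.choose k) ^ 2 * k.factorial := by
  classical
  -- the chosen extension of an embedding
  set ext : ∀ (T : Finset (Fin n)) (f : {x // x ∈ T} ↪ Fin n), Equiv.Perm (Fin n) :=
    fun T f => (exists_perm_extend T f).choose with hext
  have hextspec : ∀ T f i (h : i ∈ T), ext T f i = f ⟨i, h⟩ :=
    fun T f => (exists_perm_extend T f).choose_spec
  set Φ : (Σ T : Finset (Fin n), ({x // x ∈ T} ↪ Fin n)) → ((Fin n → ℝ) →ₗ.[ℝ] (Fin n → ℝ)) :=
    fun x => ((permLE (ext x.1 x.2) : (Fin n → ℝ) →ₗ[ℝ] (Fin n → ℝ)).toPMap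
      (coordSubspace ((↑x.1 : Set (Fin n))ᶜ))) with hΦ
  have hmem : ∀ x, Φ x ∈ MGB (weylA n) (booleanSystem n) := by
    intro x
    exact ⟨permLE (ext x.1 x.2), permLE_mem_weylA _, _, ⟨_, rfl⟩, rfl⟩
  set Ψ : (Σ T : Finset (Fin n), ({x // x ∈ T} ↪ Fin n)) → (MGB (weylA n) (booleanSystem n)) :=
    fun x => ⟨Φ x, hmem x⟩ with hΨ
  have hbij : Function.Bijective Ψ := by
    constructor
    · rintro ⟨T, f⟩ ⟨T', f'⟩ hT
      have hΦeq : Φ ⟨T, f⟩ = Φ ⟨T', f'⟩ := congrArg Subtype.val hT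
      have hdom : coordSubspace ((↑T : Set (Fin n))ᶜ) = coordSubspace ((↑T' : Set (Fin n))ᶜ) :=
        congrArg LinearPMap.domain hΦeq
      have hTT : T = T' := by
        have := coordSubspace_injective hdom
        exact Finset.coe_injective (compl_injective this)
      subst hTT
      have hf : f = f' := by
        ext ⟨i, hi⟩
        -- evaluate both partial maps at Pi.single i 1
        have hmem1 : Pi.single i (1:ℝ) ∈ coordSubspace ((↑T : Set (Fin n))ᶜ) := by
          rw [single_mem_coordSubspace]; simpa using hi
        have h1 : permLE (ext T f) (Pi.single i (1:ℝ)) = permLE (ext T f') (Pi.single i 1) := by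
          have := LinearPMap.apply_congr hΦeq
            (x := ⟨Pi.single i 1, hmem1⟩) (y := ⟨Pi.single i 1, hmem1⟩) rfl
          exact this
        rw [permLE_single, permLE_single, hextspec T f i hi, hextspec T f' i hi] at h1
        have := congrFun h1 (f ⟨i, hi⟩)
        by_contra hne
        rw [Pi.single_eq_same, Pi.single_eq_of_ne (fun e => hne (congrArg Fin.val e))] at this
        exact one_ne_zero this
      rw [hf]
    · rintro ⟨p, g, ⟨σ, hσ⟩, X, ⟨S, rfl⟩, rfl⟩
      have hg : g = permLE σ := by
        apply LinearEquiv.toLinearMap_injective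
        apply LinearMap.ext
        intro v
        funext i
        exact hσ v i
      subst hg
      set T : Finset (Fin n) := Sᶜ.toFinset with hT
      have hTS : ((↑T : Set (Fin n))ᶜ) = S := by
        rw [hT]; simp
      refine ⟨⟨T, ⟨fun x => σ x, fun a b hab => Subtype.ext (σ.injective hab)⟩⟩, ?_⟩
      apply Subtype.ext
      show Φ _ = _
      rw [hΦ]
      dsimp only
      rw [← hTS]
      exact toPMap_eq_of_agree T _ σ (fun i hi => hextspec T _ i hi)
  have hcards : Nat.card (MGB (weylA n) (booleanSystem n)) =
      Nat.card (Σ T : Finset (Fin n), ({x // x ∈ T} ↪ Fin n)) :=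
    (Nat.card_eq_of_bijective Ψ hbij).symm
  rw [hcards, Nat.card_eq_fintype_card, Fintype.card_sigma]
  have hemb : ∀ T : Finset (Fin n), Fintype.card ({x // x ∈ T} ↪ Fin n) =
      n.descFactorial T.card := by
    intro T
    rw [Fintype.card_embedding_eq, Fintype.card_coe, Fintype.card_fin]
  simp_rw [hemb]
  have := Finset.sum_powerset_apply_card (fun k => n.descFactorial k) (x := (Finset.univ : Finset (Fin n)))
  rw [Finset.card_univ, Fintype.card_fin] at this
  rw [← Finset.powerset_univ, this]
  refine Finset.sum_congr rfl fun k _ => ?_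
  rw [Nat.descFactorial_eq_factorial_mul_choose, smul_eq_mul, pow_two]
  ring
end

section
/- Let n ≥ 2. The Boolean reflection monoid of type D, namely the set M(W(D_n), B) of partial linear isomorphisms, has cardinality (as a rational number) equal to 2^{n−1}·n! · Σ_{k=0}^{n} (n choose k)/w_k, where w_0 = w_1 = 1 and w_k = 2^{k−1}·k! for k ≥ 2 (w_k being the order of the Weyl group W(D_k) with the conventions D_0 = D_1 = ∅). -/
/-- The Weyl group of type `D_n`: the even signed permutation maps
`(g_{σ,ε} v) i = ε i * v (σ⁻¹ i)` with `ε i = ±1` and `∏ i, ε i = 1`. -/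
def weylD (n : ℕ) : Set ((Fin n → ℝ) ≃ₗ[ℝ] (Fin n → ℝ)) :=
  {g | ∃ (σ : Equiv.Perm (Fin n)) (ε : Fin n → ℝ), (∀ i, ε i = 1 ∨ ε i = -1) ∧
    (∏ i, ε i) = 1 ∧
    ∀ (v : Fin n → ℝ) (i : Fin n), g v i = ε i * v (σ⁻¹ i)}

/-- The order `w_k` of the Weyl group `W(D_k)`, with the conventions
`w_0 = w_1 = 1` and `w_k = 2^{k-1} k!` for `k ≥ 2`. -/
def weylDOrder (k : ℕ) : ℚ :=
  if k ≤ 1 then 1 else 2 ^ (k - 1) * k.factorial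

open scoped Classical

noncomputable section
namespace BooleanDAux

/-- sign value of a boolean -/
def sgn (b : Bool) : ℝ := if b then 1 else -1

lemma sgn_ne_zero (b : Bool) : sgn b ≠ 0 := by cases b <;> norm_num [sgn]

lemma sgn_mul_self (b : Bool) : sgn b * sgn b = 1 := by cases b <;> norm_num [sgn]

lemma sgn_inj : Function.Injective sgn := by
  intro a b h; cases a <;> cases b <;> simp_all [sgn] <;> norm_num at h

lemma sgn_not (b : Bool) : sgn (!b) = - sgn b := by cases b <;> norm_num [sgn]

/-- standard basis vector -/
def ev {n : ℕ} (j : Fin n) : Fin n → ℝ := Pi.single j 1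

lemma ev_mem_coordSubspace {n : ℕ} (S : Set (Fin n)) (j : Fin n) :
    ev j ∈ coordSubspace S ↔ j ∉ S := by
  constructor
  · intro h hj
    have := h j hj
    simp [ev] at this
  · intro hj i hi
    have : i ≠ j := fun h => hj (h ▸ hi)
    simp [ev, Pi.single_apply, this.symm]

/-- a vector in `X_S` is the sum of its coordinates over `Sᶜ` -/
lemma toPMap_eq_of_agree {n : ℕ} (f g : (Fin n → ℝ) →ₗ[ℝ] (Fin n → ℝ)) (S : Set (Fin n))
    (h : ∀ j, j ∉ S → f (ev j) = g (ev j)) :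
    f.toPMap (coordSubspace S) = g.toPMap (coordSubspace S) := by
  refine LinearPMap.dExt rfl ?_
  rintro ⟨x, hx⟩ ⟨y, hy⟩ hxy
  change f x = g y
  obtain rfl : x = y := hxy
  have hrep : x = ∑ j : Fin n, x j • ev j := by
    funext i
    simp [ev, Pi.single_apply]
  rw [hrep, map_sum, map_sum]
  refine Finset.sum_congr rfl fun j _ => ?_
  by_cases hj : j ∈ S
  · have : x j = 0 := hx j hj
    simp [this]
  · simp [map_smul, h j hj]

lemma weyl_apply_ev {n : ℕ} (g : (Fin n → ℝ) ≃ₗ[ℝ] (Fin n → ℝ)) (σ : Equiv.Perm (Fin n))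
    (ε : Fin n → ℝ) (hg : ∀ (v : Fin n → ℝ) (i : Fin n), g v i = ε i * v (σ⁻¹ i))
    (j : Fin n) : g (ev j) = ε (σ j) • ev (σ j) := by
  funext i
  rw [hg]
  by_cases hij : i = σ j
  · subst hij
    rw [Equiv.Perm.coe_inv, Equiv.symm_apply_apply]
    simp [ev]
  · have h1 : σ⁻¹ i ≠ j := by
      intro h
      exact hij (by rw [← h]; simp [Equiv.Perm.coe_inv])
    have h2 : i ≠ σ j := hij
    simp [ev, Pi.single_apply, (by simpa using h1 : σ.symm i ≠ j), h2]

/-- signed permutation linear equivalence -/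
def signedPerm {n : ℕ} (σ : Equiv.Perm (Fin n)) (ε : Fin n → ℝ)
    (hε : ∀ i, ε i * ε i = 1) : (Fin n → ℝ) ≃ₗ[ℝ] (Fin n → ℝ) := by
  refine LinearEquiv.ofLinear
    { toFun := fun v i => ε i * v (σ⁻¹ i)
      map_add' := by intro a b; funext i; simp [mul_add]
      map_smul' := by intro c v; funext i; simp; ring }
    { toFun := fun w j => ε (σ j) * w (σ j)
      map_add' := by intro a b; funext i; simp [mul_add]
      map_smul' := by intro c v; funext i; simp; ring }
    ?_ ?_
  · ext v i
    simp only [LinearMap.comp_apply, LinearMap.coe_mk, AddHom.coe_mk, LinearMap.id_apply]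
    rw [Equiv.Perm.coe_inv, Equiv.apply_symm_apply]
    rw [← mul_assoc, hε]
    simp
  · ext v j
    simp only [LinearMap.comp_apply, LinearMap.coe_mk, AddHom.coe_mk, LinearMap.id_apply]
    rw [Equiv.Perm.coe_inv, Equiv.symm_apply_apply]
    rw [← mul_assoc, hε]
    simp

lemma signedPerm_apply {n : ℕ} (σ : Equiv.Perm (Fin n)) (ε : Fin n → ℝ)
    (hε : ∀ i, ε i * ε i = 1) (v : Fin n → ℝ) (i : Fin n) :
    signedPerm σ ε hε v i = ε i * v (σ⁻¹ i) := rfl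

lemma pm_one_mul {x y : ℝ} (hx : x = 1 ∨ x = -1) (hy : y = 1 ∨ y = -1) :
    x * y = 1 ∨ x * y = -1 := by
  rcases hx with rfl | rfl <;> rcases hy with rfl | rfl <;> norm_num

lemma sgn_pm (b : Bool) : sgn b = 1 ∨ sgn b = -1 := by cases b <;> simp [sgn]

lemma prod_sgn_pm {α : Type*} [Fintype α] (η : α → Bool) :
    (∏ j, sgn (η j)) = 1 ∨ (∏ j, sgn (η j)) = -1 :=
  Finset.prod_induction _ (fun x => x = 1 ∨ x = -1)
    (fun _ _ => pm_one_mul) (Or.inl rfl) (fun j _ => sgn_pm (η j))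

lemma exists_weyl {n : ℕ} (hn : 0 < n) (S : Finset (Fin n)) (τ : {i // i ∉ S} ↪ Fin n)
    (η : {i // i ∉ S} → Bool) (hC : S = ∅ → ∏ j, sgn (η j) = 1) :
    ∃ g ∈ weylD n, ∀ j : {i // i ∉ S}, g (ev j.1) = sgn (η j) • ev (τ j) := by
  set b : ℝ := ∏ j, sgn (η j) with hb
  have hbpm : b = 1 ∨ b = -1 := prod_sgn_pm η
  -- the permutation extending τ
  let e0 : {i // i ∉ S} ≃ {x // x ∈ Set.range τ} :=
    Equiv.ofInjective τ τ.injective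
  let σ : Equiv.Perm (Fin n) := Equiv.extendSubtype e0
  have hσ : ∀ j : {i // i ∉ S}, σ j.1 = τ j := by
    intro j
    rw [Equiv.extendSubtype_apply_of_mem e0 j.1 j.2]
    rfl
  -- the fill element
  let i0 : Fin n := if h : S.Nonempty then h.choose else ⟨0, hn⟩
  have hi0 : S ≠ ∅ → i0 ∈ S := by
    intro hS
    have h : S.Nonempty := Finset.nonempty_iff_ne_empty.mpr hS
    simp only [i0, dif_pos h]
    exact h.choose_spec
  -- the sign function
  set F : Fin n → ℝ := fun j => if h : j ∉ S then sgn (η ⟨j, h⟩) else (if j = i0 then b else 1)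
    with hF
  have hFpm : ∀ j, F j = 1 ∨ F j = -1 := by
    intro j
    by_cases h : j ∉ S
    · simp only [hF, dif_pos h]; exact sgn_pm _
    · simp only [hF, dif_neg h]
      by_cases h2 : j = i0
      · simpa [h2] using hbpm
      · simp [h2]
  have hFsq : ∀ i, F (σ⁻¹ i) * F (σ⁻¹ i) = 1 := by
    intro i
    rcases hFpm (σ⁻¹ i) with h | h <;> rw [h] <;> norm_num
  -- the product of F is 1
  have hprodF : ∏ j, F j = 1 := by
    rw [← Finset.prod_mul_prod_compl S F]
    have h1 : ∏ j ∈ Sᶜ, F j = b := by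
      rw [Finset.prod_subtype (p := fun i => i ∉ S) Sᶜ (fun i => by simp) F]
      rw [hb]
      refine Finset.prod_congr rfl fun j _ => ?_
      simp only [hF, dif_pos j.2]
    have h2 : ∏ j ∈ S, F j = ∏ j ∈ S, (if j = i0 then b else 1) := by
      refine Finset.prod_congr rfl fun j hj => ?_
      simp only [hF, dif_neg (not_not_intro hj)]
    rw [h1, h2, Finset.prod_ite_eq' S i0 (fun _ => b)]
    by_cases hS : S = ∅
    · rw [if_neg (by simp [hS]), one_mul]
      exact hC hS
    · rw [if_pos (hi0 hS)]
      rcases hbpm with h | h <;> rw [h] <;> norm_num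
  -- the product of ε is 1
  have hprodε : ∏ i, F (σ⁻¹ i) = 1 := by
    rw [← hprodF]
    exact Fintype.prod_equiv σ⁻¹ _ F (fun i => rfl) |>.symm ▸ Equiv.prod_comp σ⁻¹ F
  refine ⟨signedPerm σ (fun i => F (σ⁻¹ i)) hFsq, ⟨σ, fun i => F (σ⁻¹ i),
    fun i => hFpm _, hprodε, fun v i => rfl⟩, ?_⟩
  intro j
  rw [weyl_apply_ev _ σ (fun i => F (σ⁻¹ i)) (fun v i => rfl) j.1]
  rw [hσ j]
  have : σ⁻¹ (τ j) = j.1 := by rw [← hσ j, Equiv.Perm.coe_inv, Equiv.symm_apply_apply]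
  rw [this]
  have : F j.1 = sgn (η j) := by simp only [hF, dif_pos j.2]
  rw [this]

/-- The combinatorial model for restrictions with domain `X_S`. -/
def Model (n : ℕ) (S : Finset (Fin n)) : Type :=
  {q : ({i // i ∉ S} ↪ Fin n) × ({i // i ∉ S} → Bool) //
    S = ∅ → ∏ j, sgn (q.2 j) = 1}

instance (n : ℕ) (S : Finset (Fin n)) : Fintype (Model n S) := by
  unfold Model; infer_instance

/-- The map from the model to partial linear maps. -/
def Phi {n : ℕ} (hn : 0 < n) (x : Σ S : Finset (Fin n), Model n S) :
    (Fin n → ℝ) →ₗ.[ℝ] (Fin n → ℝ) :=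
  ((exists_weyl hn x.1 x.2.1.1 x.2.1.2 x.2.2).choose : (Fin n → ℝ) ≃ₗ[ℝ] (Fin n → ℝ))
    |>.toLinearMap.toPMap (coordSubspace (x.1 : Set (Fin n)))

lemma Phi_spec {n : ℕ} (hn : 0 < n) (x : Σ S : Finset (Fin n), Model n S) :
    (exists_weyl hn x.1 x.2.1.1 x.2.1.2 x.2.2).choose ∈ weylD n ∧
    ∀ j : {i // i ∉ x.1}, (exists_weyl hn x.1 x.2.1.1 x.2.1.2 x.2.2).choose (ev j.1)
      = sgn (x.2.1.2 j) • ev (x.2.1.1 j) :=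
  (exists_weyl hn x.1 x.2.1.1 x.2.1.2 x.2.2).choose_spec

lemma Phi_mem {n : ℕ} (hn : 0 < n) (x : Σ S : Finset (Fin n), Model n S) :
    Phi hn x ∈ MGB (weylD n) (booleanSystem n) :=
  ⟨_, (Phi_spec hn x).1, _, ⟨(x.1 : Set (Fin n)), rfl⟩, rfl⟩

lemma coordSubspace_inj {n : ℕ} {S S' : Set (Fin n)}
    (h : coordSubspace S = coordSubspace S') : S = S' := by
  ext i
  have := (ev_mem_coordSubspace S i).symm.trans (h ▸ ev_mem_coordSubspace S' i)
  · constructor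
    · intro hi
      by_contra hi'
      exact ((h ▸ (ev_mem_coordSubspace S' i).mpr hi' : ev i ∈ coordSubspace S)
        |> (ev_mem_coordSubspace S i).mp) hi
    · intro hi
      by_contra hi'
      exact ((h.symm ▸ (ev_mem_coordSubspace S i).mpr hi' : ev i ∈ coordSubspace S')
        |> (ev_mem_coordSubspace S' i).mp) hi

lemma Phi_injective {n : ℕ} (hn : 0 < n) : Function.Injective (Phi hn) := by
  rintro ⟨S, q, hq⟩ ⟨S', q', hq'⟩ h
  have hdom : coordSubspace (S : Set (Fin n)) = coordSubspace (S' : Set (Fin n)) := by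
    have := congrArg LinearPMap.domain h
    simpa [Phi] using this
  have hSS : S = S' := Finset.coe_injective (coordSubspace_inj hdom)
  subst hSS
  set g := (exists_weyl hn S q.1 q.2 hq).choose with hg
  set g' := (exists_weyl hn S q'.1 q'.2 hq').choose with hg'
  have h2 : g.toLinearMap.toPMap (coordSubspace (S : Set (Fin n)))
      = g'.toLinearMap.toPMap (coordSubspace (S : Set (Fin n))) := h
  obtain ⟨-, hfe⟩ := LinearPMap.dExt_iff.mp h2
  have key : ∀ j : {i // i ∉ S}, sgn (q.2 j) • ev (q.1 j) = sgn (q'.2 j) • ev (q'.1 j) := by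
    intro j
    have hmem : ev j.1 ∈ coordSubspace (S : Set (Fin n)) :=
      (ev_mem_coordSubspace _ _).mpr (by simpa using j.2)
    have h3 := hfe (x := ⟨ev j.1, hmem⟩) (y := ⟨ev j.1, hmem⟩) rfl
    change (g : (Fin n → ℝ) →ₗ[ℝ] (Fin n → ℝ)) (ev j.1) = (g' : (Fin n → ℝ) →ₗ[ℝ] (Fin n → ℝ)) (ev j.1) at h3
    have s1 := (Phi_spec hn ⟨S, q, hq⟩).2 j
    have s2 := (Phi_spec hn ⟨S, q', hq'⟩).2 j
    simp only at s1 s2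
    rw [← s1, ← s2]
    exact h3
  -- extract τ and η equality
  have hτη : ∀ j : {i // i ∉ S}, q.1 j = q'.1 j ∧ q.2 j = q'.2 j := by
    intro j
    have hk := key j
    have h4 := congrFun hk (q.1 j)
    simp only [Pi.smul_apply, ev, smul_eq_mul] at h4
    rw [Pi.single_eq_same] at h4
    by_cases he : q'.1 j = q.1 j
    · rw [he, Pi.single_eq_same] at h4
      have : q.2 j = q'.2 j := sgn_inj (by rw [mul_one] at h4; rw [mul_one] at h4; exact h4)
      exact ⟨he.symm, this⟩
    · rw [Pi.single_eq_of_ne (by exact fun hc => he (by exact_mod_cast hc.symm)) 1] at h4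
      exfalso
      rw [mul_one, mul_zero] at h4
      exact sgn_ne_zero _ h4
  have hq1 : q.1 = q'.1 := DFunLike.ext _ _ fun j => (hτη j).1
  have hq2 : q.2 = q'.2 := funext fun j => (hτη j).2
  have : q = q' := Prod.ext hq1 hq2
  subst this
  rfl

lemma Phi_surjective {n : ℕ} (hn : 0 < n) (p : (Fin n → ℝ) →ₗ.[ℝ] (Fin n → ℝ))
    (hp : p ∈ MGB (weylD n) (booleanSystem n)) : ∃ x, Phi hn x = p := by
  obtain ⟨g, hg, X, ⟨Sset, rfl⟩, rfl⟩ := hp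
  obtain ⟨σ, ε, hεpm, hεprod, hgact⟩ := hg
  set S : Finset (Fin n) := Sset.toFinset with hS
  have hcoe : (S : Set (Fin n)) = Sset := Set.coe_toFinset Sset
  set τ : {i // i ∉ S} ↪ Fin n :=
    ⟨fun j => σ j.1, fun a b hab => Subtype.ext (σ.injective hab)⟩ with hτ
  set η : {i // i ∉ S} → Bool := fun j => decide (ε (σ j.1) = 1) with hη
  have hsgn : ∀ j : {i // i ∉ S}, sgn (η j) = ε (σ j.1) := by
    intro j
    rcases hεpm (σ j.1) with h | h <;> simp [h, sgn, hη] <;> norm_num [h]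
  have hpar : S = ∅ → ∏ j : {i // i ∉ S}, sgn (η j) = 1 := by
    intro hSe
    calc (∏ j : {i // i ∉ S}, sgn (η j))
        = ∏ j : {i // i ∉ S}, ε (σ j.1) := Finset.prod_congr rfl fun j _ => hsgn j
      _ = ∏ i ∈ Sᶜ, ε (σ i) := (Finset.prod_subtype (p := fun i => i ∉ S) Sᶜ
            (fun i => by simp) (fun i => ε (σ i))).symm
      _ = ∏ i, ε (σ i) := by rw [show Sᶜ = Finset.univ by simp [hSe]]
      _ = ∏ i, ε i := Equiv.prod_comp σ ε
      _ = 1 := hεprod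
  refine ⟨⟨S, ⟨(τ, η), hpar⟩⟩, ?_⟩
  have hspec := (Phi_spec hn ⟨S, ⟨(τ, η), hpar⟩⟩).2
  show (_ : (Fin n → ℝ) ≃ₗ[ℝ] (Fin n → ℝ)).toLinearMap.toPMap (coordSubspace (S : Set (Fin n)))
    = g.toLinearMap.toPMap (coordSubspace Sset)
  rw [← hcoe]
  apply toPMap_eq_of_agree
  intro j hj
  have hj' : j ∉ S := by simpa using hj
  have h1 := hspec ⟨j, hj'⟩
  simp only at h1
  simp only [LinearEquiv.coe_coe]
  rw [h1, hsgn ⟨j, hj'⟩]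
  rw [weyl_apply_ev g σ ε hgact j]
  rfl

lemma card_MGB {n : ℕ} (hn : 0 < n) :
    Nat.card (MGB (weylD n) (booleanSystem n))
      = ∑ S : Finset (Fin n), Nat.card (Model n S) := by
  have e : (Σ S : Finset (Fin n), Model n S) ≃ MGB (weylD n) (booleanSystem n) :=
    Equiv.ofBijective (fun x => ⟨Phi hn x, Phi_mem hn x⟩)
      ⟨fun a b hab => Phi_injective hn (Subtype.ext_iff.mp hab),
       fun ⟨p, hp⟩ => (Phi_surjective hn p hp).imp (fun x hx => Subtype.ext hx)⟩
  rw [← Nat.card_congr e, Nat.card_eq_fintype_card, Fintype.card_sigma]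
  exact Finset.sum_congr rfl fun S _ => (Nat.card_eq_fintype_card).symm

lemma card_subtype_not_mem {n : ℕ} (S : Finset (Fin n)) :
    Nat.card {i // i ∉ S} = n - S.card := by
  rw [Nat.card_congr (Equiv.subtypeEquivRight (q := fun i => i ∈ Sᶜ)
    (fun i => (Finset.mem_compl).symm))]
  rw [Nat.card_eq_fintype_card, Fintype.card_coe, Finset.card_compl, Fintype.card_fin]

lemma card_embedding {n : ℕ} (S : Finset (Fin n)) :
    Nat.card ({i // i ∉ S} ↪ Fin n) = n.descFactorial (n - S.card) := by
  rw [Nat.card_eq_fintype_card, Fintype.card_embedding_eq, Fintype.card_fin,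
    ← Nat.card_eq_fintype_card, card_subtype_not_mem]

lemma card_model_ne_empty {n : ℕ} (S : Finset (Fin n)) (hS : S ≠ ∅) :
    Nat.card (Model n S) = n.descFactorial (n - S.card) * 2 ^ (n - S.card) := by
  have e : Model n S ≃ (({i // i ∉ S} ↪ Fin n) × ({i // i ∉ S} → Bool)) :=
    Equiv.subtypeUnivEquiv (fun q h => absurd h hS)
  rw [Nat.card_congr e, Nat.card_prod, card_embedding]
  congr 1
  rw [Nat.card_eq_fintype_card, Fintype.card_fun, Fintype.card_bool,
    ← Nat.card_eq_fintype_card, card_subtype_not_mem]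

lemma card_parity {α : Type*} [Fintype α] [Nonempty α] :
    Nat.card {η : α → Bool // ∏ j, sgn (η j) = 1} = 2 ^ (Fintype.card α - 1) := by
  set j0 : α := Classical.arbitrary α
  set flip : (α → Bool) → (α → Bool) := fun η => Function.update η j0 (!η j0) with hflip
  have hinv : ∀ η, flip (flip η) = η := by
    intro η
    funext j
    by_cases h : j = j0 <;> simp [hflip, Function.update_apply, h]
  have hprod : ∀ η : α → Bool, (∏ j, sgn (flip η j)) = -∏ j, sgn (η j) := by
    intro η
    have hfun : (fun j => sgn (flip η j))
        = Function.update (fun j => sgn (η j)) j0 (- sgn (η j0)) := by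
      funext j
      by_cases h : j = j0 <;> simp [hflip, Function.update_apply, h, sgn_not]
    calc (∏ j, sgn (flip η j))
        = ∏ j, Function.update (fun j => sgn (η j)) j0 (- sgn (η j0)) j := by rw [hfun]
      _ = (- sgn (η j0)) * ∏ j ∈ Finset.univ \ {j0}, sgn (η j) :=
          Finset.prod_update_of_mem (Finset.mem_univ j0) _ _
      _ = -(sgn (η j0) * ∏ j ∈ Finset.univ \ {j0}, sgn (η j)) := by ring
      _ = -∏ j, sgn (η j) := by
          rw [Finset.prod_eq_mul_prod_sdiff_singleton_of_mem (Finset.mem_univ j0) (fun j => sgn (η j))]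
  have e : {η : α → Bool // ∏ j, sgn (η j) = 1} ≃ {η : α → Bool // ¬ (∏ j, sgn (η j) = 1)} :=
    { toFun := fun x => ⟨flip x.1, by rw [hprod, x.2]; norm_num⟩
      invFun := fun x => ⟨flip x.1, by
        rcases prod_sgn_pm x.1 with h | h
        · exact absurd h x.2
        · rw [hprod, h]; norm_num⟩
      left_inv := fun x => Subtype.ext (hinv x.1)
      right_inv := fun x => Subtype.ext (hinv x.1) }
  have esum : ({η : α → Bool // ∏ j, sgn (η j) = 1} ⊕
      {η : α → Bool // ¬ (∏ j, sgn (η j) = 1)}) ≃ (α → Bool) :=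
    Equiv.sumCompl _
  have h1 : Nat.card {η : α → Bool // ∏ j, sgn (η j) = 1}
      = Nat.card {η : α → Bool // ¬ (∏ j, sgn (η j) = 1)} := Nat.card_congr e
  have h2 := Nat.card_congr esum
  rw [Nat.card_sum] at h2
  have h3 : Nat.card (α → Bool) = 2 ^ Fintype.card α := by
    rw [Nat.card_eq_fintype_card, Fintype.card_fun, Fintype.card_bool]
  have h5 : 0 < Fintype.card α := Fintype.card_pos
  have h6 : 2 ^ Fintype.card α = 2 * 2 ^ (Fintype.card α - 1) := by
    rw [← pow_succ']
    congr 1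
    exact (Nat.succ_pred_eq_of_pos h5).symm
  set A := Nat.card {η : α → Bool // ∏ j, sgn (η j) = 1} with hA
  set B := Nat.card {η : α → Bool // ¬ (∏ j, sgn (η j) = 1)} with hB
  set C := Nat.card (α → Bool) with hC
  set D := 2 ^ (Fintype.card α - 1) with hD
  set E := 2 ^ Fintype.card α with hE
  clear_value A B C D E
  clear hA hB hC hD hE e esum hinv hprod
  clear hflip
  clear flip j0
  omega

lemma card_model_empty {n : ℕ} (hn : 0 < n) :
    Nat.card (Model n (∅ : Finset (Fin n))) = n.descFactorial n * 2 ^ (n - 1) := by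
  have e1 : Model n (∅ : Finset (Fin n)) ≃
      {q : ({i : Fin n // i ∉ (∅ : Finset (Fin n))} ↪ Fin n) ×
        ({i : Fin n // i ∉ (∅ : Finset (Fin n))} → Bool) // ∏ j, sgn (q.2 j) = 1} :=
    Equiv.subtypeEquivRight (fun q => by simp)
  have e2 : {q : ({i : Fin n // i ∉ (∅ : Finset (Fin n))} ↪ Fin n) ×
        ({i : Fin n // i ∉ (∅ : Finset (Fin n))} → Bool) // ∏ j, sgn (q.2 j) = 1} ≃
      ({i : Fin n // i ∉ (∅ : Finset (Fin n))} ↪ Fin n) ×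
        {η : {i : Fin n // i ∉ (∅ : Finset (Fin n))} → Bool // ∏ j, sgn (η j) = 1} :=
    { toFun := fun q => (q.1.1, ⟨q.1.2, q.2⟩)
      invFun := fun x => ⟨(x.1, x.2.1), x.2.2⟩
      left_inv := fun q => rfl
      right_inv := fun x => rfl }
  have hcard : Nat.card {i : Fin n // i ∉ (∅ : Finset (Fin n))} = n := by
    rw [card_subtype_not_mem]; simp
  have hcard' : Fintype.card {i : Fin n // i ∉ (∅ : Finset (Fin n))} = n := by
    rw [← Nat.card_eq_fintype_card, hcard]
  have hne : Nonempty {i : Fin n // i ∉ (∅ : Finset (Fin n))} := by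
    rw [← Fintype.card_pos_iff, hcard']; exact hn
  rw [Nat.card_congr (e1.trans e2), Nat.card_prod, card_embedding, card_parity, hcard']
  simp

/-- count of restrictions with domain of "cosize" k -/
def fcard (n k : ℕ) : ℕ :=
  n.descFactorial (n - k) * (if k = 0 then 2 ^ (n - 1) else 2 ^ (n - k))

lemma sum_model_cards {n : ℕ} (hn : 0 < n) :
    (∑ S : Finset (Fin n), Nat.card (Model n S)) = ∑ k ∈ Finset.range (n + 1),
      n.choose k * fcard n k := by
  have h1 : (∑ S : Finset (Fin n), Nat.card (Model n S))
      = ∑ S : Finset (Fin n), fcard n S.card := by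
    refine Finset.sum_congr rfl fun S _ => ?_
    by_cases hS : S = ∅
    · subst hS
      rw [card_model_empty hn, fcard]
      simp [Nat.descFactorial_self]
    · rw [card_model_ne_empty S hS, fcard,
        if_neg (fun h => hS (Finset.card_eq_zero.mp h))]
  rw [h1, ← Finset.powerset_univ, Finset.sum_powerset_apply_card (fcard n)]
  simp [Finset.card_univ, smul_eq_mul]

lemma weylDOrder_ne_zero (k : ℕ) : weylDOrder k ≠ 0 := by
  rw [weylDOrder]
  split
  · norm_num
  · positivity

lemma fcard_mul_weylDOrder {n k : ℕ} (hn : 0 < n) (hk : k ≤ n) :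
    (fcard n k : ℚ) * weylDOrder k = 2 ^ (n - 1) * n.factorial := by
  have hdesc : ((n - (n - k)).factorial * n.descFactorial (n - k) : ℕ) = n.factorial :=
    Nat.factorial_mul_descFactorial (Nat.sub_le n k)
  have hnk : n - (n - k) = k := by omega
  rw [hnk] at hdesc
  by_cases hk1 : k ≤ 1
  · have hw : weylDOrder k = 1 := by rw [weylDOrder, if_pos hk1]
    have hfac : (k.factorial : ℕ) = 1 := by interval_cases k <;> simp
    rw [hfac, one_mul] at hdesc
    have hpow : (if k = 0 then 2 ^ (n - 1) else 2 ^ (n - k)) = 2 ^ (n - 1) := by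
      by_cases h0 : k = 0
      · rw [if_pos h0]
      · rw [if_neg h0]
        congr 1
        omega
    rw [hw, mul_one, fcard, hpow, hdesc]
    push_cast
    ring
  · have hw : weylDOrder k = 2 ^ (k - 1) * k.factorial := by
      rw [weylDOrder, if_neg hk1]
    have h0 : k ≠ 0 := by omega
    rw [hw, fcard, if_neg h0]
    have hpow : (2 : ℚ) ^ (n - k) * 2 ^ (k - 1) = 2 ^ (n - 1) := by
      rw [← pow_add]
      congr 1
      omega
    have hdq : (n.descFactorial (n - k) : ℚ) * k.factorial = n.factorial := by
      exact_mod_cast congrArg (Nat.cast (R := ℚ)) ((mul_comm _ _).trans hdesc)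
    push_cast
    calc (n.descFactorial (n - k) : ℚ) * 2 ^ (n - k) * (2 ^ (k - 1) * k.factorial)
        = ((n.descFactorial (n - k) : ℚ) * k.factorial) * (2 ^ (n - k) * 2 ^ (k - 1)) := by ring
      _ = 2 ^ (n - 1) * n.factorial := by rw [hdq, hpow]; ring

end BooleanDAux

/-- The Boolean reflection monoid of type `D_n` has order
`2^{n-1} n! ∑_{k=0}^n (n choose k)/w_k`. -/
theorem card_boolean_monoid_D (n : ℕ) (hn : 2 ≤ n) :
    (Nat.card (MGB (weylD n) (booleanSystem n)) : ℚ) =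
      2 ^ (n - 1) * n.factorial *
        ∑ k ∈ Finset.range (n + 1), (n.choose k : ℚ) / weylDOrder k := by
  have hn0 : 0 < n := by omega
  rw [BooleanDAux.card_MGB hn0, BooleanDAux.sum_model_cards hn0]
  rw [Finset.mul_sum]
  push_cast
  refine Finset.sum_congr rfl fun k hk => ?_
  have hkn : k ≤ n := by
    have := Finset.mem_range.mp hk
    omega
  have key := BooleanDAux.fcard_mul_weylDOrder hn0 hkn
  have hw := BooleanDAux.weylDOrder_ne_zero k
  field_simp
  calc (n.choose k : ℚ) * (BooleanDAux.fcard n k : ℚ) * weylDOrder k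
      = (n.choose k : ℚ) * ((BooleanDAux.fcard n k : ℚ) * weylDOrder k) := by ring
    _ = (n.choose k : ℚ) * (2 ^ (n - 1) * n.factorial) := by rw [key]
    _ = n.choose k * 2 ^ (n - 1) * n.factorial := by ring
end
end

section
/- Let n ≥ 1. The map Φ sending α ∈ M(W(A_{n−1}), B) to the partial permutation of Fin n with domain {i : e_i ∈ dom α} and with Φ(α)(i) equal to the unique j such that α(e_i) = e_j, is a well-defined bijection from M(W(A_{n−1}), B) onto the set of all partial permutations of Fin n; moreover Φ sends the identity on V to the identity partial permutation, and Φ(αβ) = Φ(α)∘Φ(β) for all α, β (where ∘ is composition of partial permutations: domain {i ∈ dom Φ(α) : Φ(α)(i) ∈ dom Φ(β)}, value Φ(β)(Φ(α)(i))). Thus the Boolean reflection monoid of type A is isomorphic to the symmetric inverse monoid I_n. -/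
/-- Composition of partial linear maps: domain `{v ∈ dom α : α v ∈ dom β}`,
value `(αβ) v = β (α v)`. -/
noncomputable def pcomp {F V : Type*} [Field F] [AddCommGroup V] [Module F V]
    (α β : V →ₗ.[F] V) : V →ₗ.[F] V :=
  { domain := (β.domain.comap α.toFun).map α.domain.subtype
    toFun := β.toFun.comp
      ((LinearMap.codRestrict β.domain (α.toFun.comp (β.domain.comap α.toFun).subtype)
          (fun c => c.2)).comp
        (Submodule.equivMapOfInjective α.domain.subtype (Submodule.injective_subtype _)
            (β.domain.comap α.toFun)).symm.toLinearMap) }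

theorem Equiv.Perm.inv_apply_self {α : Type*} (f : Equiv.Perm α) (x : α) : f⁻¹ (f x) = x :=
  f.symm_apply_apply x

theorem Equiv.Perm.apply_inv_self {α : Type*} (f : Equiv.Perm α) (x : α) : f (f⁻¹ x) = x :=
  f.apply_symm_apply x

namespace BooleanAAux

variable {n : ℕ}

lemma pcomp_apply {F V : Type*} [Field F] [AddCommGroup V] [Module F V]
    (α β : V →ₗ.[F] V) (x : (pcomp α β).domain) (h1 : (x : V) ∈ α.domain)
    (h2 : α ⟨(x : V), h1⟩ ∈ β.domain) :
    pcomp α β x = β ⟨α ⟨(x : V), h1⟩, h2⟩ := by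
  set Z := β.domain.comap α.toFun with hZ
  set e := Submodule.equivMapOfInjective α.domain.subtype (Submodule.injective_subtype _) Z
    with he
  have hx : ((e.symm x : Z) : α.domain) = ⟨(x : V), h1⟩ := by
    apply Subtype.ext
    have h3 := Submodule.coe_equivMapOfInjective_apply α.domain.subtype
      (Submodule.injective_subtype _) Z (e.symm x)
    rw [← he] at h3
    exact h3.symm.trans (congrArg Subtype.val (e.apply_symm_apply x))
  show β.toFun ((LinearMap.codRestrict β.domain (α.toFun.comp Z.subtype)
      (fun c => c.2)) (e.symm x)) = β.toFun ⟨α ⟨(x : V), h1⟩, h2⟩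
  congr 1
  apply Subtype.ext
  show α.toFun ((e.symm x : Z) : α.domain) = α.toFun ⟨(x : V), h1⟩
  rw [hx]

lemma pcomp_toPMap {F V : Type*} [Field F] [AddCommGroup V] [Module F V]
    (f k : V →ₗ[F] V) (X Y : Submodule F V) :
    pcomp (f.toPMap X) (k.toPMap Y) = (k ∘ₗ f).toPMap (X ⊓ Y.comap f) := by
  have hdom : (pcomp (f.toPMap X) (k.toPMap Y)).domain = X ⊓ Y.comap f := by
    show Submodule.map X.subtype (Submodule.comap (f.comp X.subtype) Y) = _
    rw [Submodule.comap_comp]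
    exact Submodule.map_comap_subtype _ _
  apply LinearPMap.ext hdom
  intro x y hxy
  have hy : (x : V) ∈ X ⊓ Submodule.comap f Y := hxy
  rw [Submodule.mem_inf] at hy
  have h1 : (x : V) ∈ X := hy.1
  have h2 : (f.toPMap X) ⟨(x : V), h1⟩ ∈ Y := by
    exact hy.2
  rw [pcomp_apply _ _ ⟨x, y⟩ h1 h2]
  show k ((f.toPMap X) ⟨(x : V), h1⟩) = ((k ∘ₗ f).toPMap (X ⊓ Y.comap f)) ⟨x, hxy⟩
  rfl

lemma mem_coordSubspace {S : Set (Fin n)} {v : Fin n → ℝ} :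
    v ∈ coordSubspace S ↔ ∀ i ∈ S, v i = 0 := Iff.rfl

lemma single_mem_coordSubspace {S : Set (Fin n)} {i : Fin n} :
    (Pi.single i 1 : Fin n → ℝ) ∈ coordSubspace S ↔ i ∉ S := by
  constructor
  · intro h hi
    have := h i hi
    simp at this
  · intro hi j hj
    have hne : j ≠ i := fun e => hi (e ▸ hj)
    simp [Pi.single_eq_of_ne hne]

lemma single_left_injective {j j' : Fin n}
    (h : (Pi.single j 1 : Fin n → ℝ) = Pi.single j' 1) : j = j' := by
  by_contra hne
  have h2 := congrFun h j
  rw [Pi.single_eq_same, Pi.single_eq_of_ne hne] at h2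
  exact one_ne_zero h2

open Classical in
/-- The partial permutation `i ↦ σ i` with domain the complement of `S`. -/
noncomputable def pp (σ : Equiv.Perm (Fin n)) (S : Set (Fin n)) : Fin n ≃. Fin n where
  toFun i := if i ∈ S then none else some (σ i)
  invFun j := if σ.symm j ∈ S then none else some (σ.symm j)
  inv a b := by
    show (if σ.symm b ∈ S then none else some (σ.symm b)) = some a ↔
      (if a ∈ S then none else some (σ a)) = some b
    by_cases hb : σ.symm b ∈ S
    · rw [if_pos hb]
      by_cases ha : a ∈ S
      · rw [if_pos ha]
        simp
      · rw [if_neg ha]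
        simp only [reduceCtorEq, false_iff, Option.some_inj]
        rintro rfl
        exact ha (by simpa using hb)
    · rw [if_neg hb]
      by_cases ha : a ∈ S
      · rw [if_pos ha]
        simp only [Option.some_inj, reduceCtorEq, iff_false]
        rintro rfl
        exact hb ha
      · rw [if_neg ha]
        simp only [Option.some_inj]
        constructor
        · rintro rfl; simp
        · rintro rfl; simp

open Classical in
lemma pp_apply_of_mem {σ : Equiv.Perm (Fin n)} {S : Set (Fin n)} {i : Fin n} (h : i ∈ S) :
    pp σ S i = none := by
  show (if i ∈ S then none else some (σ i)) = none
  rw [if_pos h]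

open Classical in
lemma pp_apply_of_not_mem {σ : Equiv.Perm (Fin n)} {S : Set (Fin n)} {i : Fin n} (h : i ∉ S) :
    pp σ S i = some (σ i) := by
  show (if i ∈ S then none else some (σ i)) = some (σ i)
  rw [if_neg h]

lemma g_single {g : (Fin n → ℝ) ≃ₗ[ℝ] (Fin n → ℝ)} {σ : Equiv.Perm (Fin n)}
    (hg : ∀ (v : Fin n → ℝ) (i : Fin n), g v i = v (σ⁻¹ i)) (i : Fin n) :
    g (Pi.single i 1) = Pi.single (σ i) 1 := by
  funext k
  rw [hg, Pi.single_apply, Pi.single_apply]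
  by_cases hk : k = σ i
  · subst hk; simp
  · rw [if_neg hk, if_neg]
    intro hc
    exact hk (by rw [← hc]; simp)

lemma pp_spec {g : (Fin n → ℝ) ≃ₗ[ℝ] (Fin n → ℝ)} {σ : Equiv.Perm (Fin n)}
    (hg : ∀ (v : Fin n → ℝ) (i : Fin n), g v i = v (σ⁻¹ i)) (S : Set (Fin n)) (i j : Fin n) :
    pp σ S i = some j ↔
      ∃ h : (Pi.single i 1 : Fin n → ℝ) ∈
          ((g : (Fin n → ℝ) →ₗ[ℝ] (Fin n → ℝ)).toPMap (coordSubspace S)).domain,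
        ((g : (Fin n → ℝ) →ₗ[ℝ] (Fin n → ℝ)).toPMap (coordSubspace S)) ⟨Pi.single i 1, h⟩ =
          Pi.single j 1 := by
  constructor
  · intro hpp
    by_cases hi : i ∈ S
    · rw [pp_apply_of_mem hi] at hpp; exact absurd hpp (by simp)
    · rw [pp_apply_of_not_mem hi, Option.some_inj] at hpp
      refine ⟨single_mem_coordSubspace.mpr hi, ?_⟩
      show g (Pi.single i 1) = Pi.single j 1
      rw [g_single hg, hpp]
  · rintro ⟨h, hv⟩
    have hi : i ∉ S := single_mem_coordSubspace.mp h
    have hv' : g (Pi.single i 1) = Pi.single j 1 := hv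
    rw [g_single hg] at hv'
    rw [pp_apply_of_not_mem hi, Option.some_inj]
    exact single_left_injective hv'

lemma rep (α : MGB (weylA n) (booleanSystem n)) :
    ∃ (σ : Equiv.Perm (Fin n)) (S : Set (Fin n)) (g : (Fin n → ℝ) ≃ₗ[ℝ] (Fin n → ℝ)),
      (∀ (v : Fin n → ℝ) (i : Fin n), g v i = v (σ⁻¹ i)) ∧
      (α : (Fin n → ℝ) →ₗ.[ℝ] (Fin n → ℝ)) =
        (g : (Fin n → ℝ) →ₗ[ℝ] (Fin n → ℝ)).toPMap (coordSubspace S) := by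
  obtain ⟨g, ⟨σ, hσ⟩, X, ⟨S, hS⟩, hα⟩ := α.2
  exact ⟨σ, S, g, hσ, by rw [hα, hS]⟩

noncomputable def phi (α : MGB (weylA n) (booleanSystem n)) : Fin n ≃. Fin n :=
  pp (rep α).choose (rep α).choose_spec.choose

lemma phi_spec (α : MGB (weylA n) (booleanSystem n)) (i j : Fin n) :
    phi α i = some j ↔
      ∃ h : (Pi.single i 1 : Fin n → ℝ) ∈ (α : (Fin n → ℝ) →ₗ.[ℝ] (Fin n → ℝ)).domain,
        (α : (Fin n → ℝ) →ₗ.[ℝ] (Fin n → ℝ)) ⟨Pi.single i 1, h⟩ = Pi.single j 1 := by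
  obtain ⟨g, hg, hα⟩ := (rep α).choose_spec.choose_spec
  rw [hα]
  exact pp_spec hg _ i j

lemma option_ext {β : Type*} {o₁ o₂ : Option β} (h : ∀ j, o₁ = some j ↔ o₂ = some j) :
    o₁ = o₂ := by
  cases o₂ with
  | some j => exact (h j).mpr rfl
  | none =>
    cases o₁ with
    | none => rfl
    | some j => exact absurd ((h j).mp rfl) (by simp)

lemma phi_eq (α : MGB (weylA n) (booleanSystem n)) {g : (Fin n → ℝ) ≃ₗ[ℝ] (Fin n → ℝ)}
    {σ : Equiv.Perm (Fin n)} {S : Set (Fin n)}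
    (hg : ∀ (v : Fin n → ℝ) (i : Fin n), g v i = v (σ⁻¹ i))
    (hα : (α : (Fin n → ℝ) →ₗ.[ℝ] (Fin n → ℝ)) =
      (g : (Fin n → ℝ) →ₗ[ℝ] (Fin n → ℝ)).toPMap (coordSubspace S)) :
    phi α = pp σ S := by
  apply PEquiv.ext
  intro i
  apply option_ext
  intro j
  rw [phi_spec α i j, pp_spec hg S i j, hα]

open Classical in
lemma pp_congr {σ τ : Equiv.Perm (Fin n)} {S T : Set (Fin n)} (h : pp σ S = pp τ T) :
    S = T ∧ ∀ i ∉ S, σ i = τ i := by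
  have key : ∀ i, (pp σ S) i = (pp τ T) i := fun i => by rw [h]
  have hST : S = T := by
    ext i
    constructor
    · intro hi
      by_contra hT
      have h2 := key i
      rw [pp_apply_of_mem hi, pp_apply_of_not_mem hT] at h2
      exact absurd h2 (by simp)
    · intro hi
      by_contra hS
      have h2 := key i
      rw [pp_apply_of_not_mem hS, pp_apply_of_mem hi] at h2
      exact absurd h2 (by simp)
  refine ⟨hST, fun i hi => ?_⟩
  have h2 := key i
  rw [pp_apply_of_not_mem hi, pp_apply_of_not_mem (hST ▸ hi), Option.some_inj] at h2
  exact h2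

lemma phi_injective : Function.Injective (phi (n := n)) := by
  intro α β hphi
  obtain ⟨σ, S, g, hg, hα⟩ := rep α
  obtain ⟨τ, T, h, hh, hβ⟩ := rep β
  have h1 : pp σ S = pp τ T := by
    rw [← phi_eq α hg hα, ← phi_eq β hh hβ, hphi]
  obtain ⟨hST, hστ⟩ := pp_congr h1
  subst hST
  apply Subtype.ext
  rw [hα, hβ]
  refine LinearPMap.ext rfl fun x y hxy => ?_
  show g (x : Fin n → ℝ) = h (x : Fin n → ℝ)
  funext k
  rw [hg, hh]
  have hy : ∀ i ∈ S, (x : Fin n → ℝ) i = 0 := y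
  by_cases hk : σ⁻¹ k ∈ S
  · have hk' : τ⁻¹ k ∈ S := by
      by_contra hc
      have h2 : σ (τ⁻¹ k) = k := by
        rw [hστ _ hc]; exact Equiv.Perm.apply_inv_self τ k
      have h3 : τ⁻¹ k = σ⁻¹ k := by
        apply Equiv.injective σ
        rw [h2, Equiv.Perm.apply_inv_self]
      exact hc (by rw [h3]; exact hk)
    rw [hy _ hk, hy _ hk']
  · have h2 : τ (σ⁻¹ k) = k := by
      rw [← hστ _ hk]; exact Equiv.Perm.apply_inv_self σ k
    have h3 : σ⁻¹ k = τ⁻¹ k := by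
      apply Equiv.injective τ
      rw [h2, Equiv.Perm.apply_inv_self]
    rw [h3]

noncomputable def Pperm (σ : Equiv.Perm (Fin n)) : (Fin n → ℝ) ≃ₗ[ℝ] (Fin n → ℝ) where
  toFun v i := v (σ.symm i)
  map_add' _ _ := rfl
  map_smul' _ _ := rfl
  invFun v i := v (σ i)
  left_inv v := funext fun i => by simp
  right_inv v := funext fun i => by simp

lemma Pperm_formula (σ : Equiv.Perm (Fin n)) :
    ∀ (v : Fin n → ℝ) (i : Fin n), Pperm σ v i = v (σ⁻¹ i) := fun _ _ => rfl

lemma phi_surjective : Function.Surjective (phi (n := n)) := by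
  classical
  intro f
  set S : Set (Fin n) := {i | f i = none} with hSdef
  have hfwd : ∀ x : {i // (f i).isSome}, (f.symm ((f x.1).get x.2)).isSome := by
    intro x
    rw [Option.isSome_iff_exists]
    exact ⟨x.1, f.mem_iff_mem.mpr (Option.get_mem x.2)⟩
  have hbwd : ∀ y : {j // (f.symm j).isSome}, (f ((f.symm y.1).get y.2)).isSome := by
    intro y
    rw [Option.isSome_iff_exists]
    exact ⟨y.1, (f.symm.mem_iff_mem).mpr (Option.get_mem y.2)⟩
  let e : {i // (f i).isSome} ≃ {j // (f.symm j).isSome} :=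
    { toFun := fun x => ⟨(f x.1).get x.2, hfwd x⟩
      invFun := fun y => ⟨(f.symm y.1).get y.2, hbwd y⟩
      left_inv := fun x => by
        apply Subtype.ext
        have h1 : f.symm ((f x.1).get x.2) = some x.1 :=
          f.mem_iff_mem.mpr (Option.get_mem x.2)
        simp [h1]
      right_inv := fun y => by
        apply Subtype.ext
        have h1 : f ((f.symm y.1).get y.2) = some y.1 :=
          (f.symm.mem_iff_mem).mpr (Option.get_mem y.2)
        simp [h1] }
  let σ := e.extendSubtype
  have hσ : ∀ (i : Fin n) (h : (f i).isSome), σ i = (f i).get h := by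
    intro i h
    show e.extendSubtype i = _
    rw [Equiv.extendSubtype_apply_of_mem e i h]
    rfl
  refine ⟨⟨((Pperm σ : (Fin n → ℝ) ≃ₗ[ℝ] (Fin n → ℝ)) :
      (Fin n → ℝ) →ₗ[ℝ] (Fin n → ℝ)).toPMap (coordSubspace S),
    ⟨Pperm σ, ⟨σ, Pperm_formula σ⟩, coordSubspace S, ⟨S, rfl⟩, rfl⟩⟩, ?_⟩
  rw [phi_eq _ (Pperm_formula σ) rfl]
  apply PEquiv.ext
  intro i
  by_cases hi : f i = none
  · rw [pp_apply_of_mem (show i ∈ S from hi), hi]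
  · have hs : (f i).isSome := Option.ne_none_iff_isSome.mp hi
    rw [pp_apply_of_not_mem (show i ∉ S from hi), hσ i hs, Option.some_get]

lemma phi_id (α : MGB (weylA n) (booleanSystem n))
    (hid : (α : (Fin n → ℝ) →ₗ.[ℝ] (Fin n → ℝ)) =
      (LinearMap.id : (Fin n → ℝ) →ₗ[ℝ] (Fin n → ℝ)).toPMap ⊤) :
    phi α = PEquiv.refl (Fin n) := by
  have htop : (⊤ : Submodule ℝ (Fin n → ℝ)) = coordSubspace (∅ : Set (Fin n)) := by
    ext v
    simp [mem_coordSubspace]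
  have hα : (α : (Fin n → ℝ) →ₗ.[ℝ] (Fin n → ℝ)) =
      ((LinearEquiv.refl ℝ (Fin n → ℝ)) : (Fin n → ℝ) →ₗ[ℝ] (Fin n → ℝ)).toPMap
        (coordSubspace (∅ : Set (Fin n))) := by
    rw [hid, htop]
    rfl
  rw [phi_eq α (g := LinearEquiv.refl ℝ (Fin n → ℝ)) (σ := 1) (fun v i => by simp) hα]
  apply PEquiv.ext
  intro i
  rw [pp_apply_of_not_mem (Set.notMem_empty i), PEquiv.refl_apply]
  rfl

lemma phi_mul (α β : MGB (weylA n) (booleanSystem n)) :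
    ∃ h : pcomp (α : (Fin n → ℝ) →ₗ.[ℝ] (Fin n → ℝ)) β ∈ MGB (weylA n) (booleanSystem n),
      phi ⟨pcomp (α : (Fin n → ℝ) →ₗ.[ℝ] (Fin n → ℝ)) β, h⟩ = (phi α).trans (phi β) := by
  obtain ⟨σ, S, g, hg, hα⟩ := rep α
  obtain ⟨τ, T, h, hh, hβ⟩ := rep β
  have hgh : ∀ (v : Fin n → ℝ) (i : Fin n), (g.trans h) v i = v ((σ.trans τ)⁻¹ i) := by
    intro v i
    rw [LinearEquiv.trans_apply, hh, hg]
    rfl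
  have hdom : coordSubspace S ⊓ (coordSubspace T).comap (g : (Fin n → ℝ) →ₗ[ℝ] (Fin n → ℝ))
      = coordSubspace (S ∪ σ ⁻¹' T) := by
    ext v
    simp only [Submodule.mem_inf, Submodule.mem_comap, LinearEquiv.coe_coe,
      mem_coordSubspace, Set.mem_union, Set.mem_preimage]
    constructor
    · rintro ⟨hv1, hv2⟩ i hi
      rcases hi with hi | hi
      · exact hv1 i hi
      · have h2 := hv2 (σ i) hi
        rwa [hg, Equiv.Perm.inv_apply_self] at h2
    · intro hv
      constructor
      · intro i hi; exact hv i (Or.inl hi)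
      · intro i hi
        rw [hg]
        refine hv (σ⁻¹ i) (Or.inr ?_)
        show σ (σ⁻¹ i) ∈ T
        rwa [Equiv.Perm.apply_inv_self]
  have hcomp : pcomp (α : (Fin n → ℝ) →ₗ.[ℝ] (Fin n → ℝ)) β =
      ((g.trans h : (Fin n → ℝ) ≃ₗ[ℝ] (Fin n → ℝ)) :
        (Fin n → ℝ) →ₗ[ℝ] (Fin n → ℝ)).toPMap (coordSubspace (S ∪ σ ⁻¹' T)) := by
    rw [hα, hβ, pcomp_toPMap, hdom, LinearEquiv.coe_trans]
  have hmem : pcomp (α : (Fin n → ℝ) →ₗ.[ℝ] (Fin n → ℝ)) β ∈ MGB (weylA n) (booleanSystem n) := by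
    rw [hcomp]
    exact ⟨g.trans h, ⟨σ.trans τ, hgh⟩, coordSubspace (S ∪ σ ⁻¹' T), ⟨S ∪ σ ⁻¹' T, rfl⟩, rfl⟩
  refine ⟨hmem, ?_⟩
  rw [phi_eq _ hgh hcomp, phi_eq α hg hα, phi_eq β hh hβ]
  apply PEquiv.ext
  intro i
  have htr : ((pp σ S).trans (pp τ T)) i = ((pp σ S) i).bind (pp τ T) := rfl
  by_cases hiS : i ∈ S
  · rw [pp_apply_of_mem (Set.mem_union_left _ hiS), htr, pp_apply_of_mem hiS]
    rfl
  · by_cases hiT : σ i ∈ T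
    · rw [pp_apply_of_mem (Set.mem_union_right _ (Set.mem_preimage.mpr hiT)), htr,
        pp_apply_of_not_mem hiS, Option.bind_some, pp_apply_of_mem hiT]
    · rw [pp_apply_of_not_mem (fun hc => hc.elim hiS hiT), htr,
        pp_apply_of_not_mem hiS, Option.bind_some, pp_apply_of_not_mem hiT]
      rfl

end BooleanAAux

/-- There is a bijection `Φ` from the Boolean reflection monoid of
type `A`, `M(W(A_{n-1}),B)`, onto the symmetric inverse monoid of all partial
permutations of `Fin n`, characterized by: `Φ α` sends `i` to `j` iff the standard
basis vector `e_i` lies in `dom α` and `α e_i = e_j`.  Moreover `Φ` sends the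
identity on `V` to the identity partial permutation and is multiplicative with
respect to composition of partial maps. -/
theorem boolean_monoid_A_iso_symmetric_inverse_monoid (n : ℕ) (hn : 1 ≤ n) :
    ∃ Φ : MGB (weylA n) (booleanSystem n) → (Fin n ≃. Fin n),
      (∀ (α : MGB (weylA n) (booleanSystem n)) (i j : Fin n),
        Φ α i = some j ↔
          ∃ h : (Pi.single i 1 : Fin n → ℝ) ∈ (α : (Fin n → ℝ) →ₗ.[ℝ] (Fin n → ℝ)).domain,
            (α : (Fin n → ℝ) →ₗ.[ℝ] (Fin n → ℝ)) ⟨Pi.single i 1, h⟩ = Pi.single j 1) ∧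
      Function.Bijective Φ ∧
      (∀ α : MGB (weylA n) (booleanSystem n),
        (α : (Fin n → ℝ) →ₗ.[ℝ] (Fin n → ℝ)) =
            (LinearMap.id : (Fin n → ℝ) →ₗ[ℝ] (Fin n → ℝ)).toPMap ⊤ →
          Φ α = PEquiv.refl (Fin n)) ∧
      (∀ α β : MGB (weylA n) (booleanSystem n),
        ∃ h : pcomp (α : (Fin n → ℝ) →ₗ.[ℝ] (Fin n → ℝ)) β ∈ MGB (weylA n) (booleanSystem n),
          Φ ⟨pcomp (α : (Fin n → ℝ) →ₗ.[ℝ] (Fin n → ℝ)) β, h⟩ = (Φ α).trans (Φ β)) := by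
  exact ⟨BooleanAAux.phi, BooleanAAux.phi_spec,
    ⟨BooleanAAux.phi_injective, BooleanAAux.phi_surjective⟩,
    BooleanAAux.phi_id, BooleanAAux.phi_mul⟩
end

section
/- Let n ≥ 3. Model the signed set {±1,…,±n} as Fin n × Bool with negation ν(i,b) := (i, ¬b); a partial signed permutation is a partial permutation τ of Fin n × Bool whose domain is closed under ν and with τ(ν x) = ν(τ x) for all x in the domain. For i ∈ Y ⊆ Fin n let τ_{i,Y} be the partial signed permutation with domain Y × Bool sending (i,b) ↦ (i,¬b) and fixing (y,b) for y ∈ Y, y ≠ i; for {i,i+1} ⊆ Y ⊆ Fin n let μ_{i,Y} be the partial signed permutation with domain Y × Bool interchanging (i,b) and (i+1,b) for each b and fixing (y,b) for y ∈ Y ∖ {i,i+1}. Then every partial signed permutation is a composition of finitely many of the τ_{i,Y} and μ_{j,Y} (the empty composition being the identity); that is, the monoid J_n of partial signed permutations is generated by these elements. -/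
/-- The partial permutation obtained by restricting a permutation `f` to a
subset `D` that it preserves. -/
def permRestrict {γ : Type*} (f : Equiv.Perm γ) (D : Set γ) [DecidablePred (· ∈ D)]
    (hD : ∀ x, x ∈ D ↔ f x ∈ D) : γ ≃. γ where
  toFun x := if x ∈ D then some (f x) else none
  invFun y := if y ∈ D then some (f.symm y) else none
  inv a b := by
    constructor
    · intro h
      try simp only [Option.mem_def] at h ⊢
      by_cases hb : b ∈ D
      · rw [if_pos hb] at h
        have hab : f.symm b = a := Option.some.inj h
        have ha : a ∈ D := (hD a).mpr (by rw [← hab, Equiv.apply_symm_apply]; exact hb)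
        rw [if_pos ha, ← hab, Equiv.apply_symm_apply]
      · rw [if_neg hb] at h; exact absurd h (by simp)
    · intro h
      try simp only [Option.mem_def] at h ⊢
      by_cases ha : a ∈ D
      · rw [if_pos ha] at h
        have hab : f a = b := Option.some.inj h
        have hb : b ∈ D := hab ▸ (hD a).mp ha
        rw [if_pos hb, ← hab, Equiv.symm_apply_apply]
      · rw [if_neg ha] at h; exact absurd h (by simp)

lemma swap_mem_iff {n : ℕ} {Y : Finset (Fin n)} {i i' : Fin n} (h1 : i ∈ Y) (h2 : i' ∈ Y) :
    ∀ x : Fin n, x ∈ Y ↔ Equiv.swap i i' x ∈ Y := by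
  have key : ∀ x : Fin n, x ∈ Y → Equiv.swap i i' x ∈ Y := by
    intro x hx
    rcases eq_or_ne x i with rfl | hxi
    · rw [Equiv.swap_apply_left]; exact h2
    · rcases eq_or_ne x i' with rfl | hxi'
      · rw [Equiv.swap_apply_right]; exact h1
      · rw [Equiv.swap_apply_of_ne_of_ne hxi hxi']; exact hx
  intro x
  constructor
  · exact fun hx => key x hx
  · intro hx
    have := key _ hx
    rwa [Equiv.swap_apply_self] at this

/-- Negation on the signed index set: `ν (i, b) = (i, ¬b)`. -/
def nu {n : ℕ} (x : Fin n × Bool) : Fin n × Bool := (x.1, !x.2)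

/-- The partial signed permutations of `Fin n × Bool`: partial permutations whose
domain is closed under `ν` and which commute with `ν`. -/
def partialSignedPerms (n : ℕ) : Set ((Fin n × Bool) ≃. (Fin n × Bool)) :=
  {τ | ∀ x y, τ x = some y → τ (nu x) = some (nu y)}

/-- The sign change at `i`, as a (full) permutation of `Fin n × Bool`. -/
def flipPerm {n : ℕ} (i : Fin n) : Equiv.Perm (Fin n × Bool) :=
  Function.Involutive.toPerm (fun x => if x.1 = i then (x.1, !x.2) else x)
    (by intro x; by_cases h : x.1 = i <;> simp [h, Prod.ext_iff])

/-- The partial signed permutation `τ_{i,Y}`: domain `Y × Bool`, sending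
`(i,b) ↦ (i,¬b)` and fixing `(y,b)` for `y ∈ Y`, `y ≠ i`. -/
noncomputable def tauIY {n : ℕ} (i : Fin n) (Y : Finset (Fin n)) (hi : i ∈ Y) :
    (Fin n × Bool) ≃. (Fin n × Bool) :=
  letI : DecidablePred (· ∈ {x : Fin n × Bool | x.1 ∈ Y}) := Classical.decPred _
  permRestrict (flipPerm i) {x : Fin n × Bool | x.1 ∈ Y}
    (by
      intro x
      unfold flipPerm
      by_cases h : x.1 = i <;> simp [Function.Involutive.toPerm, h])

/-- The partial signed permutation `μ_{i,Y}`: domain `Y × Bool`, interchanging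
`(i,b)` and `(i+1,b)` for each `b` and fixing `(y,b)` for `y ∈ Y ∖ {i,i+1}`. -/
noncomputable def muIY {n : ℕ} (i : Fin n) (hi : (i : ℕ) + 1 < n) (Y : Finset (Fin n))
    (h1 : i ∈ Y) (h2 : (⟨(i : ℕ) + 1, hi⟩ : Fin n) ∈ Y) :
    (Fin n × Bool) ≃. (Fin n × Bool) :=
  letI : DecidablePred (· ∈ {x : Fin n × Bool | x.1 ∈ Y}) := Classical.decPred _
  permRestrict ((Equiv.swap i ⟨(i : ℕ) + 1, hi⟩).prodCongr (Equiv.refl Bool))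
    {x : Fin n × Bool | x.1 ∈ Y}
    (by
      intro x
      simp only [Set.mem_setOf_eq, Equiv.prodCongr_apply, Prod.map_fst]
      exact swap_mem_iff h1 h2 x.1)


section AuxPSP

open Equiv Function

lemma pequiv_trans_apply' {α β γ : Type*} (f : α ≃. β) (g : β ≃. γ) (a : α) :
    f.trans g a = (f a).bind g := rfl

variable {n : ℕ}

lemma flipPerm_apply (i : Fin n) (x : Fin n × Bool) :
    flipPerm i x = if x.1 = i then (x.1, !x.2) else x := rfl

lemma flipPerm_fst (i : Fin n) (x : Fin n × Bool) : (flipPerm i x).1 = x.1 := by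
  rw [flipPerm_apply]; split <;> rfl

lemma flipPerm_flipPerm (i : Fin n) (x : Fin n × Bool) : flipPerm i (flipPerm i x) = x := by
  rw [flipPerm_apply, flipPerm_apply]
  by_cases h : x.1 = i <;> simp [h, Prod.ext_iff]

lemma permRestrict_apply {γ : Type*} (f : Equiv.Perm γ) (D : Set γ)
    [DecidablePred (· ∈ D)] (hD : ∀ x, x ∈ D ↔ f x ∈ D) (x : γ) :
    permRestrict f D hD x = if x ∈ D then some (f x) else none := rfl

lemma tauIY_apply (i : Fin n) (Y : Finset (Fin n)) (hi : i ∈ Y) (x : Fin n × Bool) :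
    tauIY i Y hi x = if x.1 ∈ Y then some (flipPerm i x) else none := by
  simp only [tauIY]
  rw [permRestrict_apply]
  split_ifs with h1 h2 <;> simp_all [Set.mem_setOf_eq]

lemma muIY_apply (i : Fin n) (hi : (i : ℕ) + 1 < n) (Y : Finset (Fin n))
    (h1 : i ∈ Y) (h2 : (⟨(i : ℕ) + 1, hi⟩ : Fin n) ∈ Y) (x : Fin n × Bool) :
    muIY i hi Y h1 h2 x =
      if x.1 ∈ Y then
        some (((Equiv.swap i ⟨(i : ℕ) + 1, hi⟩).prodCongr (Equiv.refl Bool)) x)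
      else none := by
  simp only [muIY]
  rw [permRestrict_apply]
  split_ifs with h1' h2' <;> simp_all [Set.mem_setOf_eq]

/-- The generator predicate. -/
def IsGenPSP (n : ℕ) (p : (Fin n × Bool) ≃. (Fin n × Bool)) : Prop :=
  (∃ (i : Fin n) (Y : Finset (Fin n)) (hi : i ∈ Y), p = tauIY i Y hi) ∨
  (∃ (i : Fin n) (hi : (i : ℕ) + 1 < n) (Y : Finset (Fin n))
    (h1 : i ∈ Y) (h2 : (⟨(i : ℕ) + 1, hi⟩ : Fin n) ∈ Y), p = muIY i hi Y h1 h2)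

/-- Reachability: expressible as a finite composition of generators. -/
def ReachPSP (n : ℕ) (τ : (Fin n × Bool) ≃. (Fin n × Bool)) : Prop :=
  ∃ L : List ((Fin n × Bool) ≃. (Fin n × Bool)),
    (∀ p ∈ L, IsGenPSP n p) ∧ τ = L.foldl PEquiv.trans (PEquiv.refl (Fin n × Bool))

lemma foldl_trans_eq {α : Type*} (L : List (α ≃. α)) (init : α ≃. α) :
    L.foldl PEquiv.trans init = init.trans (L.foldl PEquiv.trans (PEquiv.refl α)) := by
  induction L generalizing init with
  | nil => simp [PEquiv.trans_refl]
  | cons a L ih =>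
    simp only [List.foldl_cons]
    rw [ih (init.trans a), ih ((PEquiv.refl α).trans a), PEquiv.refl_trans,
      PEquiv.trans_assoc]

lemma reachPSP_refl : ReachPSP n (PEquiv.refl (Fin n × Bool)) :=
  ⟨[], by simp, rfl⟩

lemma reachPSP_gen {p : (Fin n × Bool) ≃. (Fin n × Bool)} (hp : IsGenPSP n p) :
    ReachPSP n p :=
  ⟨[p], by simpa using hp, by simp [PEquiv.refl_trans]⟩

lemma reachPSP_trans {τ ρ : (Fin n × Bool) ≃. (Fin n × Bool)}
    (h1 : ReachPSP n τ) (h2 : ReachPSP n ρ) : ReachPSP n (τ.trans ρ) := by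
  obtain ⟨L1, hL1, rfl⟩ := h1
  obtain ⟨L2, hL2, rfl⟩ := h2
  refine ⟨L1 ++ L2, ?_, ?_⟩
  · intro p hp
    rcases List.mem_append.mp hp with h | h
    · exact hL1 p h
    · exact hL2 p h
  · rw [List.foldl_append]
    exact (foldl_trans_eq L2 _).symm

lemma reach_tau_univ (i : Fin n) : ReachPSP n (flipPerm i).toPEquiv := by
  have h : (flipPerm i).toPEquiv = tauIY i Finset.univ (Finset.mem_univ i) := by
    apply PEquiv.ext; intro x
    rw [tauIY_apply, Equiv.toPEquiv_apply]
    simp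
  rw [h]; exact reachPSP_gen (Or.inl ⟨i, _, _, rfl⟩)

lemma reach_mu_univ (i : Fin n) (hi : (i : ℕ) + 1 < n) :
    ReachPSP n ((Equiv.swap i ⟨(i : ℕ) + 1, hi⟩).prodCongr (Equiv.refl Bool)).toPEquiv := by
  have h : ((Equiv.swap i ⟨(i : ℕ) + 1, hi⟩).prodCongr (Equiv.refl Bool)).toPEquiv
      = muIY i hi Finset.univ (Finset.mem_univ _) (Finset.mem_univ _) := by
    apply PEquiv.ext; intro x
    rw [muIY_apply, Equiv.toPEquiv_apply]; simp
  rw [h]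
  exact reachPSP_gen (Or.inr ⟨i, hi, _, _, _, rfl⟩)

/-- The sign-flip permutation determined by `δ`. -/
def HdPerm (δ : Fin n → Bool) : Equiv.Perm (Fin n × Bool) :=
  Function.Involutive.toPerm (fun x => (x.1, xor (δ x.1) x.2))
    (by intro x; cases h : δ x.1 <;> simp [h, Prod.ext_iff])

lemma HdPerm_apply (δ : Fin n → Bool) (x : Fin n × Bool) :
    HdPerm δ x = (x.1, xor (δ x.1) x.2) := rfl

lemma HdPerm_false {δ : Fin n → Bool} (hall : ∀ j, δ j = false) :
    HdPerm δ = Equiv.refl _ := by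
  apply Equiv.ext; intro x; simp [HdPerm_apply, hall]

lemma reach_Hd : ∀ (k : ℕ) (δ : Fin n → Bool),
    (Finset.univ.filter fun j => δ j = true).card ≤ k →
    ReachPSP n (HdPerm δ).toPEquiv := by
  intro k
  induction k with
  | zero =>
    intro δ hδ
    have hall : ∀ j, δ j = false := by
      intro j
      by_contra h
      rw [Bool.not_eq_false] at h
      have hmem : j ∈ Finset.univ.filter fun j => δ j = true := by simp [h]
      have := Finset.card_pos.mpr ⟨j, hmem⟩
      omega
    rw [HdPerm_false hall, Equiv.toPEquiv_refl]; exact reachPSP_refl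
  | succ k ih =>
    intro δ hδ
    by_cases h : ∃ j, δ j = true
    · obtain ⟨j0, hj0⟩ := h
      have hdecomp : HdPerm δ =
          (flipPerm j0).trans (HdPerm (Function.update δ j0 false)) := by
        apply Equiv.ext; intro x
        simp only [Equiv.trans_apply, HdPerm_apply, flipPerm_apply]
        by_cases hx : x.1 = j0
        · have h1 : (if x.1 = j0 then (x.1, !x.2) else x) = (x.1, !x.2) := if_pos hx
          rw [h1]
          have h2 : Function.update δ j0 false x.1 = false := by rw [hx]; simp
          simp [hx, hj0, h2, Prod.ext_iff]
        · have h1 : (if x.1 = j0 then (x.1, !x.2) else x) = x := if_neg hx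
          rw [h1]
          simp [Function.update_of_ne hx]
      rw [hdecomp, Equiv.toPEquiv_trans]
      apply reachPSP_trans (reach_tau_univ j0)
      apply ih
      have hsub : (Finset.univ.filter fun j => Function.update δ j0 false j = true)
          = (Finset.univ.filter fun j => δ j = true).erase j0 := by
        ext j
        by_cases hj : j = j0 <;>
          simp [Finset.mem_erase, Function.update_apply, hj]
      rw [hsub, Finset.card_erase_of_mem (by simp [hj0])]
      omega
    · push_neg at h
      have hall : ∀ j, δ j = false := fun j => Bool.eq_false_iff.mpr (h j)
      rw [HdPerm_false hall, Equiv.toPEquiv_refl]; exact reachPSP_refl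

/-- Lift a permutation of `Fin n` to one of `Fin n × Bool`. -/
def liftPerm (σ : Equiv.Perm (Fin n)) : Equiv.Perm (Fin n × Bool) :=
  σ.prodCongr (Equiv.refl Bool)

lemma liftPerm_apply (σ : Equiv.Perm (Fin n)) (x : Fin n × Bool) :
    liftPerm σ x = (σ x.1, x.2) := rfl

lemma reach_lift (hn1 : 1 ≤ n) (σ : Equiv.Perm (Fin n)) :
    ReachPSP n (liftPerm σ).toPEquiv := by
  obtain ⟨m, rfl⟩ : ∃ m, n = m + 1 := ⟨n - 1, by omega⟩
  have hσ : σ ∈ Submonoid.closure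
      (Set.range fun i : Fin m => Equiv.swap i.castSucc i.succ) := by
    rw [Equiv.Perm.mclosure_swap_castSucc_succ]; trivial
  induction hσ using Submonoid.closure_induction with
  | mem p hp =>
    obtain ⟨i, rfl⟩ := hp
    have hi : ((i.castSucc : Fin (m + 1)) : ℕ) + 1 < m + 1 := by
      have := i.isLt
      simp only [Fin.coe_castSucc]
      omega
    have hs : (i.succ : Fin (m + 1)) = ⟨((i.castSucc : Fin (m + 1)) : ℕ) + 1, hi⟩ :=
      Fin.ext (by simp)
    show ReachPSP (m + 1)
      ((Equiv.swap i.castSucc i.succ).prodCongr (Equiv.refl Bool)).toPEquiv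
    rw [hs]
    exact reach_mu_univ _ hi
  | one =>
    have h1 : liftPerm (1 : Equiv.Perm (Fin (m + 1))) = Equiv.refl _ := by
      apply Equiv.ext; intro x; simp [liftPerm_apply]
    rw [h1, Equiv.toPEquiv_refl]; exact reachPSP_refl
  | mul a b _ _ iha ihb =>
    have hmul : liftPerm (a * b) = (liftPerm b).trans (liftPerm a) := by
      apply Equiv.ext; intro x
      simp [liftPerm_apply, Equiv.Perm.mul_apply]
    rw [hmul, Equiv.toPEquiv_trans]
    exact reachPSP_trans ihb iha

end AuxPSP

/-- For `n ≥ 3`, the monoid `J_n` of partial signed permutations of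
`Fin n × Bool` is generated by the `τ_{i,Y}` and `μ_{j,Y}`: every partial signed
permutation is a finite composition of them (the empty composition being the
identity). -/
theorem partial_signed_perms_generated
    (n : ℕ) (hn : 3 ≤ n) (τ : (Fin n × Bool) ≃. (Fin n × Bool))
    (hτ : τ ∈ partialSignedPerms n) :
    ∃ L : List ((Fin n × Bool) ≃. (Fin n × Bool)),
      (∀ p ∈ L,
        (∃ (i : Fin n) (Y : Finset (Fin n)) (hi : i ∈ Y), p = tauIY i Y hi) ∨
        (∃ (i : Fin n) (hi : (i : ℕ) + 1 < n) (Y : Finset (Fin n))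
          (h1 : i ∈ Y) (h2 : (⟨(i : ℕ) + 1, hi⟩ : Fin n) ∈ Y), p = muIY i hi Y h1 h2)) ∧
      τ = L.foldl PEquiv.trans (PEquiv.refl (Fin n × Bool)) := by
  classical
  suffices h : ReachPSP n τ by
    obtain ⟨L, h1, h2⟩ := h
    exact ⟨L, fun p hp => h1 p hp, h2⟩
  set Y : Finset (Fin n) := Finset.univ.filter (fun i : Fin n => (τ (i, false)).isSome)
    with hYdef
  -- domain description
  have hdom : ∀ x : Fin n × Bool, x.1 ∉ Y → τ x = none := by
    rintro ⟨i, b⟩ hx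
    have hnone : τ (i, false) = none := by
      by_contra hne
      exact hx (Finset.mem_filter.mpr ⟨Finset.mem_univ _, Option.isSome_iff_ne_none.mpr hne⟩)
    cases b
    · exact hnone
    · by_contra hne
      obtain ⟨y, hy⟩ := Option.ne_none_iff_exists'.mp hne
      have := hτ (i, true) y hy
      have hnu : nu (i, true) = (i, false) := rfl
      rw [hnu] at this
      rw [this] at hnone
      exact Option.some_ne_none _ hnone
  rcases eq_or_ne Y ∅ with hY0 | hYne
  · -- empty domain : τ is the empty partial permutation
    have h3 : 3 ≤ n := hn
    let a : Fin n := ⟨0, by omega⟩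
    let b : Fin n := ⟨1, by omega⟩
    have hab : a ≠ b := by simp [a, b, Fin.ext_iff]
    have ha : a ∈ ({a} : Finset (Fin n)) := Finset.mem_singleton_self a
    have hb : b ∈ ({b} : Finset (Fin n)) := Finset.mem_singleton_self b
    refine ⟨[tauIY a {a} ha, tauIY b {b} hb], ?_, ?_⟩
    · rintro p hp
      rcases List.mem_pair.mp hp with rfl | rfl
      · exact Or.inl ⟨a, _, ha, rfl⟩
      · exact Or.inl ⟨b, _, hb, rfl⟩
    · have hfold : ([tauIY a {a} ha, tauIY b {b} hb] : List _).foldl PEquiv.trans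
          (PEquiv.refl (Fin n × Bool)) = (tauIY a {a} ha).trans (tauIY b {b} hb) := by
        simp [PEquiv.refl_trans]
      rw [hfold]
      apply PEquiv.ext
      intro x
      rw [hdom x (by rw [hY0]; exact Finset.notMem_empty _), pequiv_trans_apply',
        tauIY_apply]
      by_cases hxa : x.1 ∈ ({a} : Finset (Fin n))
      · rw [if_pos hxa]
        show (none : Option (Fin n × Bool)) = tauIY b {b} hb (flipPerm a x)
        have hxb : x.1 ∉ ({b} : Finset (Fin n)) := by
          rw [Finset.mem_singleton, Finset.mem_singleton.mp hxa]
          exact hab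
        rw [tauIY_apply, flipPerm_fst, if_neg hxb]
      · rw [if_neg hxa]; rfl
  · -- nonempty domain
    obtain ⟨i0, hi0⟩ := Finset.nonempty_iff_ne_empty.mpr hYne
    -- extract the underlying data
    set F : Fin n → Fin n × Bool := fun i => (τ (i, false)).getD (i, false) with hFdef
    have hF : ∀ i ∈ Y, τ (i, false) = some (F i) := by
      intro i hi
      have hs : (τ (i, false)).isSome := (Finset.mem_filter.mp hi).2
      cases hcase : τ (i, false) with
      | none => rw [hcase] at hs; simp at hs
      | some z => simp [F, hcase]
    set φ : Fin n → Fin n := fun i => (F i).1 with hφdef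
    set ε : Fin n → Bool := fun i => (F i).2 with hεdef
    have hτ_true : ∀ i ∈ Y, τ (i, true) = some (φ i, !(ε i)) := by
      intro i hi
      have := hτ (i, false) (F i) (hF i hi)
      have hnu : nu (i, false) = (i, true) := rfl
      rw [hnu] at this
      exact this
    have hinj : ∀ i ∈ Y, ∀ i' ∈ Y, φ i = φ i' → i = i' := by
      intro i hi i' hi' he
      by_cases hee : ε i = ε i'
      · have hFF : F i = F i' := Prod.ext he hee
        have h1 : F i ∈ τ (i, false) := by rw [hF i hi]; rfl
        have h2 : F i ∈ τ (i', false) := by rw [hF i' hi', hFF]; rfl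
        have := τ.inj h1 h2
        exact (Prod.mk.injEq _ _ _ _).mp this |>.1
      · have hee' : ε i' = !(ε i) := by
          revert hee; generalize ε i = a; generalize ε i' = b; revert a b; decide
        have hFF : F i' = (φ i, !(ε i)) := Prod.ext he.symm hee'
        have h1 : (φ i, !(ε i)) ∈ τ (i', false) := by rw [hF i' hi', hFF]; rfl
        have h2 : (φ i, !(ε i)) ∈ τ (i, true) := by rw [hτ_true i hi]; rfl
        have := τ.inj h1 h2
        have hb : (false : Bool) = true := ((Prod.mk.injEq _ _ _ _).mp this).2
        simp at hb
    -- extend to a permutation of `Fin n`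
    set Z : Finset (Fin n) := Y.image φ with hZdef
    obtain ⟨e1, he1⟩ : ∃ e1 : {x // x ∈ Y} ≃ {x // x ∈ Z},
        ∀ x : {x // x ∈ Y}, (e1 x : Fin n) = φ x.1 := by
      refine ⟨Equiv.ofBijective (fun x => ⟨φ x.1, Finset.mem_image_of_mem φ x.2⟩) ⟨?_, ?_⟩,
        fun x => rfl⟩
      · rintro ⟨i, hi⟩ ⟨i', hi'⟩ h
        exact Subtype.ext (hinj i hi i' hi' (congrArg Subtype.val h))
      · rintro ⟨z, hz⟩
        obtain ⟨i, hi, he⟩ := Finset.mem_image.mp hz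
        exact ⟨⟨i, hi⟩, Subtype.ext he⟩
    have hcard : Fintype.card {x : Fin n // ¬x ∈ Y} = Fintype.card {x : Fin n // ¬x ∈ Z} := by
      rw [Fintype.card_subtype_compl, Fintype.card_subtype_compl, Fintype.card_congr e1]
    have e2 : {x : Fin n // ¬x ∈ Y} ≃ {x : Fin n // ¬x ∈ Z} := Fintype.equivOfCardEq hcard
    set σ : Equiv.Perm (Fin n) :=
      (Equiv.sumCompl (· ∈ Y)).symm.trans ((e1.sumCongr e2).trans (Equiv.sumCompl (· ∈ Z)))
      with hσdef
    have hσ : ∀ i ∈ Y, σ i = φ i := by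
      intro i hi
      simp only [hσdef, Equiv.trans_apply]
      rw [Equiv.sumCompl_symm_apply_of_pos hi]
      simp only [Equiv.sumCongr_apply, Sum.map_inl, Equiv.sumCompl_apply_inl]
      exact he1 ⟨i, hi⟩
    set δ : Fin n → Bool := fun j => ε (σ.symm j) with hδdef
    set f : Equiv.Perm (Fin n × Bool) := (liftPerm σ).trans (HdPerm δ) with hfdef
    have hfx : ∀ x : Fin n × Bool, f x = (σ x.1, xor (ε x.1) x.2) := by
      intro x
      have : f x = (σ x.1, xor (δ (σ x.1)) x.2) := rfl
      rw [this, hδdef]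
      simp
    have hmain : ∀ x : Fin n × Bool, x.1 ∈ Y → τ x = some (f x) := by
      rintro ⟨i, b⟩ hi
      rw [hfx ⟨i, b⟩]
      simp only
      rw [hσ i hi]
      cases b
      · rw [hF i hi]
        simp [φ, ε]
      · rw [hτ_true i hi]
        simp
    -- final decomposition
    set T : (Fin n × Bool) ≃. (Fin n × Bool) := tauIY i0 Y hi0 with hTdef
    have hfin : τ = T.trans (T.trans f.toPEquiv) := by
      apply PEquiv.ext
      intro x
      rw [pequiv_trans_apply', hTdef, tauIY_apply]
      by_cases hx : x.1 ∈ Y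
      · rw [if_pos hx]
        show τ x = (T.trans f.toPEquiv) (flipPerm i0 x)
        rw [pequiv_trans_apply', hTdef, tauIY_apply, flipPerm_fst, if_pos hx]
        show τ x = f.toPEquiv (flipPerm i0 (flipPerm i0 x))
        rw [flipPerm_flipPerm, Equiv.toPEquiv_apply]
        exact hmain x hx
      · rw [if_neg hx, hdom x hx]; rfl
    rw [hfin]
    refine reachPSP_trans (reachPSP_gen (Or.inl ⟨i0, Y, hi0, rfl⟩))
      (reachPSP_trans (reachPSP_gen (Or.inl ⟨i0, Y, hi0, rfl⟩)) ?_)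
    rw [hfdef, Equiv.toPEquiv_trans]
    exact reachPSP_trans (reach_lift (by omega) σ)
      (reach_Hd ((Finset.univ.filter fun j => δ j = true).card) δ le_rfl)
end

section
/- Let F be a field and V an F-vector space. Then the following are equivalent: (i) every linear isomorphism between subspaces of V extends to a linear automorphism of V, i.e. for all subspaces X, Y of V and every F-linear isomorphism e : X ≃ Y there exists g ∈ GL(V) with g x = e x for all x ∈ X; (ii) V is finite-dimensional over F. (This says that the inverse monoid ML(V) of all partial linear isomorphisms of V is factorizable if and only if V is finite-dimensional.) -/
/-- The inverse monoid `ML(V)` of partial linear isomorphisms of a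
vector space `V` is factorizable — i.e. every linear isomorphism between subspaces
of `V` extends to a linear automorphism of `V` — if and only if `V` is
finite-dimensional. -/
theorem ML_factorizable_iff_finiteDimensional
    {F V : Type*} [Field F] [AddCommGroup V] [Module F V] :
    (∀ (X Y : Submodule F V) (e : X ≃ₗ[F] Y),
        ∃ g : V ≃ₗ[F] V, ∀ x : X, g (x : V) = (e x : V)) ↔
      FiniteDimensional F V := by
  constructor
  · intro h
    by_contra hfd
    -- take a basis of V; its index type is infinite
    set ι := Module.Basis.ofVectorSpaceIndex F V
    set b : Module.Basis ι F V := Module.Basis.ofVectorSpace F V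
    have hinf : Infinite ι := by
      by_contra hfin
      have : Finite ι := not_infinite_iff_finite.mp hfin
      have := Module.Finite.of_basis b
      exact hfd this
    obtain ⟨i₀⟩ : Nonempty ι := inferInstance
    -- X = span of the basis minus one vector
    let s : Set ι := {i₀}ᶜ
    let X : Submodule F V := Submodule.span F (Set.range fun i : s => b i)
    have hli : LinearIndependent F (fun i : s => b i) :=
      b.linearIndependent.comp Subtype.val Subtype.val_injective
    let bX : Module.Basis s F X := Module.Basis.span hli
    -- a bijection ι ≃ s since ι is infinite
    have hcard : Cardinal.mk s = Cardinal.mk ι := by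
      apply Cardinal.mk_compl_of_infinite
      simp [Cardinal.one_lt_aleph0.trans_le (Cardinal.aleph0_le_mk ι)]
    obtain ⟨σ⟩ := Cardinal.eq.mp hcard.symm
    let e' : V ≃ₗ[F] X := b.equiv bX σ
    let e : X ≃ₗ[F] (⊤ : Submodule F V) :=
      e'.symm.trans (Submodule.topEquiv (R := F) (M := V)).symm
    obtain ⟨g, hg⟩ := h X ⊤ e
    have hex : ∀ x : X, g (x : V) = e'.symm x := by
      intro x
      have := hg x
      simpa [e] using this
    -- b i₀ ∉ X
    have hnot : b i₀ ∉ X := by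
      have hr : (Set.range fun i : s => b i) = b '' s := by
        ext v; simp [Set.range, s]
      have := b.linearIndependent.notMem_span_image
        (s := s) (x := i₀) (by simp [s])
      simpa [X, hr] using this
    -- contradiction: g maps X onto V, but g is injective and b i₀ ∉ X
    have : g ((e' (g (b i₀)) : X) : V) = g (b i₀) := by
      rw [hex]
      simp
    have := g.injective this
    exact hnot (this ▸ (e' (g (b i₀))).2)
  · intro hfd X Y e
    obtain ⟨X', hX⟩ := Submodule.exists_isCompl X
    obtain ⟨Y', hY⟩ := Submodule.exists_isCompl Y
    have hdim : Module.finrank F X' = Module.finrank F Y' := by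
      have h1 := Submodule.finrank_add_eq_of_isCompl hX
      have h2 := Submodule.finrank_add_eq_of_isCompl hY
      have h3 : Module.finrank F X = Module.finrank F Y := e.finrank_eq
      omega
    let f : X' ≃ₗ[F] Y' := LinearEquiv.ofFinrankEq _ _ hdim
    refine ⟨(Submodule.prodEquivOfIsCompl X X' hX).symm.trans
      ((e.prodCongr f).trans (Submodule.prodEquivOfIsCompl Y Y' hY)), ?_⟩
    intro x
    have : (Submodule.prodEquivOfIsCompl X X' hX).symm (x : V) = (x, 0) := by
      apply (Submodule.prodEquivOfIsCompl X X' hX).injective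
      simp
    simp [this]
end

section
/- Let F be a field, V an F-vector space, W a finite subgroup of GL(V), and B a system of subspaces for W, and let M = M(W,B) with the composition of partial linear isomorphisms. Let ρ = g|_X and σ = h|_Y with g, h ∈ W and X, Y ∈ B. Then: (1) {ρα : α ∈ M} = {σα : α ∈ M} if and only if X = Y; (2) {αρ : α ∈ M} = {ασ : α ∈ M} if and only if the image g(X) equals the image h(Y); (3) there exists τ ∈ M with {ρα : α ∈ M} = {τα : α ∈ M} and {ατ : α ∈ M} = {ασ : α ∈ M} if and only if Y = k(X) for some k ∈ W; (4) if every member of B is finite-dimensional, then {αρβ : α, β ∈ M} = {ασβ : α, β ∈ M} if and only if the condition in (3) holds. (These compute Green's relations R, L, D and J on the reflection monoid M(W,B).) -/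
section Aux
variable {F V : Type*} [Field F] [AddCommGroup V] [Module F V]

theorem toPMap_eq_iff' {f f' : V →ₗ[F] V} {p p' : Submodule F V} :
    f.toPMap p = f'.toPMap p' ↔ p = p' ∧ ∀ x ∈ p, f x = f' x := by
  constructor
  · intro hEq
    have hdom : p = p' := by
      have := congrArg LinearPMap.domain hEq
      simpa [LinearMap.toPMap_domain] using this
    subst hdom
    refine ⟨rfl, fun x hx => ?_⟩
    obtain ⟨hd, hv⟩ := LinearPMap.ext_iff.mp hEq
    have := hv (x := x) (hf := hx) (hg := hx)
    simpa [LinearMap.toPMap_apply] using this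
  · rintro ⟨rfl, hfun⟩
    refine LinearPMap.ext rfl ?_
    intro x y hxy
    exact hfun x y

theorem pcomp_toPMap' (e f : V →ₗ[F] V) (A B : Submodule F V) :
    pcomp (e.toPMap A) (f.toPMap B) = (f ∘ₗ e).toPMap (A ⊓ B.comap e) := by
  have hdom : (pcomp (e.toPMap A) (f.toPMap B)).domain = A ⊓ B.comap e := by
    ext x
    constructor
    · rintro ⟨a, ha, rfl⟩
      exact ⟨a.2, ha⟩
    · intro hx
      exact ⟨⟨x, hx.1⟩, hx.2, rfl⟩
  refine LinearPMap.ext hdom ?_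
  intro x y hxy
  set eqv := Submodule.equivMapOfInjective A.subtype (Submodule.injective_subtype _)
    (((f.toPMap B).domain).comap (e.toPMap A).toFun) with heqv
  have hx : (((eqv.symm ⟨x, y⟩ : _) : A) : V) = (x : V) :=
    Submodule.map_equivMapOfInjective_symm_apply _ _ _ ⟨x, y⟩
  show f (e (((eqv.symm ⟨x, y⟩ : _) : A) : V)) = (f ∘ₗ e) x
  rw [hx]
  rfl

end Aux

section Aux2
variable {F V : Type*} [Field F] [AddCommGroup V] [Module F V]

theorem pcomp_equiv' (g k : V ≃ₗ[F] V) (X Z : Submodule F V) :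
    pcomp ((g : V →ₗ[F] V).toPMap X) ((k : V →ₗ[F] V).toPMap Z)
      = ((k * g : V ≃ₗ[F] V) : V →ₗ[F] V).toPMap (X ⊓ Z.comap (g : V →ₗ[F] V)) := by
  rw [pcomp_toPMap']
  rfl

theorem mem_map_equiv'' (e : V ≃ₗ[F] V) (P : Submodule F V) (x : V) :
    x ∈ P.map (e : V →ₗ[F] V) ↔ e.symm x ∈ P := by
  constructor
  · rintro ⟨y, hy, rfl⟩; simpa using hy
  · intro hx; exact ⟨e.symm x, hx, by simp⟩

theorem map_mul_eq' (a b : V ≃ₗ[F] V) (P : Submodule F V) :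
    P.map ((a * b : V ≃ₗ[F] V) : V →ₗ[F] V)
      = (P.map ((b : V ≃ₗ[F] V) : V →ₗ[F] V)).map (a : V →ₗ[F] V) := by
  rw [← Submodule.map_comp]
  rfl

theorem map_inv_map' (a : V ≃ₗ[F] V) (P : Submodule F V) :
    (P.map (a : V →ₗ[F] V)).map ((a⁻¹ : V ≃ₗ[F] V) : V →ₗ[F] V) = P := by
  rw [← Submodule.map_comp]
  ext x
  simp only [Submodule.mem_map, LinearMap.coe_comp, Function.comp_apply, LinearEquiv.coe_coe]
  constructor
  · rintro ⟨y, hy, rfl⟩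
    have : (a⁻¹ : V ≃ₗ[F] V) (a y) = y := a.symm_apply_apply y
    rwa [this]
  · intro hx
    exact ⟨x, hx, a.symm_apply_apply x⟩

theorem comap_eq_map_inv' (a : V ≃ₗ[F] V) (P : Submodule F V) :
    P.comap (a : V →ₗ[F] V) = P.map ((a⁻¹ : V ≃ₗ[F] V) : V →ₗ[F] V) := by
  ext x
  rw [Submodule.mem_comap, mem_map_equiv'' (a⁻¹ : V ≃ₗ[F] V) P x]
  rfl

end Aux2

section Aux3
variable {F V : Type*} [Field F] [AddCommGroup V] [Module F V]
variable {W : Subgroup (V ≃ₗ[F] V)} {B : Set (Submodule F V)}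

/-- The identity on all of `V`, as an element of `M(W,B)`. -/
theorem one_top_mem' (hV : (⊤ : Submodule F V) ∈ B) :
    ((1 : V ≃ₗ[F] V) : V →ₗ[F] V).toPMap ⊤ ∈ MGB (W : Set (V ≃ₗ[F] V)) B :=
  ⟨1, one_mem _, ⊤, hV, rfl⟩

theorem self_mem_Rset' (hV : (⊤ : Submodule F V) ∈ B) (g : V ≃ₗ[F] V) (X : Submodule F V) :
    (g : V →ₗ[F] V).toPMap X ∈
      {p | ∃ α ∈ MGB (W : Set (V ≃ₗ[F] V)) B, p = pcomp ((g : V →ₗ[F] V).toPMap X) α} := by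
  refine ⟨_, one_top_mem' hV, ?_⟩
  rw [pcomp_equiv', one_mul]
  simp [Submodule.comap_top]

theorem self_mem_Lset' (hV : (⊤ : Submodule F V) ∈ B) (g : V ≃ₗ[F] V) (X : Submodule F V) :
    (g : V →ₗ[F] V).toPMap X ∈
      {p | ∃ α ∈ MGB (W : Set (V ≃ₗ[F] V)) B, p = pcomp α ((g : V →ₗ[F] V).toPMap X)} := by
  refine ⟨_, one_top_mem' hV, ?_⟩
  rw [pcomp_equiv', mul_one]
  simp

theorem Rsub' (hmapB : ∀ X ∈ B, ∀ g ∈ W, X.map (g : V →ₗ[F] V) ∈ B)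
    {g h : V ≃ₗ[F] V} (hg : g ∈ W) (hh : h ∈ W) {X : Submodule F V} :
    {p | ∃ α ∈ MGB (W : Set (V ≃ₗ[F] V)) B, p = pcomp ((g : V →ₗ[F] V).toPMap X) α} ⊆
      {p | ∃ α ∈ MGB (W : Set (V ≃ₗ[F] V)) B, p = pcomp ((h : V →ₗ[F] V).toPMap X) α} := by
  rintro p ⟨α, ⟨k, hk, Z, hZ, rfl⟩, rfl⟩
  refine ⟨((k * g * h⁻¹ : V ≃ₗ[F] V) : V →ₗ[F] V).toPMap
      ((Z.comap (g : V →ₗ[F] V)).map (h : V →ₗ[F] V)),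
    ⟨k * g * h⁻¹, mul_mem (mul_mem hk hg) (inv_mem hh), _, ?_, rfl⟩, ?_⟩
  · rw [comap_eq_map_inv']
    exact hmapB _ (hmapB _ hZ _ (inv_mem hg)) _ hh
  · rw [pcomp_equiv', pcomp_equiv']
    refine (toPMap_eq_iff'.mpr ⟨?_, fun x _ => ?_⟩).symm
    · congr 1
      exact Submodule.comap_map_eq_of_injective h.injective _
    · rw [inv_mul_cancel_right]

theorem Lsub' {g h : V ≃ₗ[F] V} (hg : g ∈ W) (hh : h ∈ W) {X Y : Submodule F V}
    (hI : X.map (g : V →ₗ[F] V) = Y.map (h : V →ₗ[F] V)) :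
    {p | ∃ α ∈ MGB (W : Set (V ≃ₗ[F] V)) B, p = pcomp α ((g : V →ₗ[F] V).toPMap X)} ⊆
      {p | ∃ α ∈ MGB (W : Set (V ≃ₗ[F] V)) B, p = pcomp α ((h : V →ₗ[F] V).toPMap Y)} := by
  rintro p ⟨α, ⟨k, hk, Z, hZ, rfl⟩, rfl⟩
  refine ⟨((h⁻¹ * (g * k) : V ≃ₗ[F] V) : V →ₗ[F] V).toPMap Z,
    ⟨h⁻¹ * (g * k), mul_mem (inv_mem hh) (mul_mem hg hk), Z, hZ, rfl⟩, ?_⟩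
  rw [pcomp_equiv', pcomp_equiv', mul_inv_cancel_left]
  refine toPMap_eq_iff'.mpr ⟨?_, fun x _ => rfl⟩
  congr 1
  ext v
  rw [Submodule.mem_comap, Submodule.mem_comap]
  have e1 : (k : V →ₗ[F] V) v ∈ X ↔ g ((k : V →ₗ[F] V) v) ∈ Y.map (h : V →ₗ[F] V) := by
    rw [← hI, mem_map_equiv'']
    simp
  rw [e1, mem_map_equiv'']
  rfl

theorem R_iff' (hV : (⊤ : Submodule F V) ∈ B)
    (hmapB : ∀ X ∈ B, ∀ g ∈ W, X.map (g : V →ₗ[F] V) ∈ B)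
    {g h : V ≃ₗ[F] V} (hg : g ∈ W) (hh : h ∈ W) {X Y : Submodule F V} :
    ({p | ∃ α ∈ MGB (W : Set (V ≃ₗ[F] V)) B, p = pcomp ((g : V →ₗ[F] V).toPMap X) α} =
      {p | ∃ α ∈ MGB (W : Set (V ≃ₗ[F] V)) B, p = pcomp ((h : V →ₗ[F] V).toPMap Y) α}) ↔
    X = Y := by
  constructor
  · intro hset
    have key : ∀ (g' h' : V ≃ₗ[F] V) (X' Y' : Submodule F V),
        ({p | ∃ α ∈ MGB (W : Set (V ≃ₗ[F] V)) B, p = pcomp ((g' : V →ₗ[F] V).toPMap X') α} =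
          {p | ∃ α ∈ MGB (W : Set (V ≃ₗ[F] V)) B, p = pcomp ((h' : V →ₗ[F] V).toPMap Y') α}) →
        X' ≤ Y' := by
      intro g' h' X' Y' hs
      have hmem := self_mem_Rset' (W := W) hV g' X'
      rw [hs] at hmem
      obtain ⟨α, ⟨k, hk, Z, hZ, rfl⟩, hEq⟩ := hmem
      rw [pcomp_equiv'] at hEq
      have := (toPMap_eq_iff'.mp hEq).1
      rw [this]
      exact inf_le_left
    exact le_antisymm (key g h X Y hset) (key h g Y X hset.symm)
  · rintro rfl
    exact Set.Subset.antisymm (Rsub' hmapB hg hh) (Rsub' hmapB hh hg)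

theorem L_iff' (hV : (⊤ : Submodule F V) ∈ B)
    {g h : V ≃ₗ[F] V} (hg : g ∈ W) (hh : h ∈ W) {X Y : Submodule F V} :
    ({p | ∃ α ∈ MGB (W : Set (V ≃ₗ[F] V)) B, p = pcomp α ((g : V →ₗ[F] V).toPMap X)} =
      {p | ∃ α ∈ MGB (W : Set (V ≃ₗ[F] V)) B, p = pcomp α ((h : V →ₗ[F] V).toPMap Y)}) ↔
    X.map (g : V →ₗ[F] V) = Y.map (h : V →ₗ[F] V) := by
  constructor
  · intro hset
    have key : ∀ (g' h' : V ≃ₗ[F] V) (X' Y' : Submodule F V),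
        ({p | ∃ α ∈ MGB (W : Set (V ≃ₗ[F] V)) B, p = pcomp α ((g' : V →ₗ[F] V).toPMap X')} =
          {p | ∃ α ∈ MGB (W : Set (V ≃ₗ[F] V)) B, p = pcomp α ((h' : V →ₗ[F] V).toPMap Y')}) →
        Y'.map (h' : V →ₗ[F] V) ≤ X'.map (g' : V →ₗ[F] V) := by
      intro g' h' X' Y' hs
      have hmem := self_mem_Lset' (W := W) hV h' Y'
      rw [← hs] at hmem
      obtain ⟨α, ⟨k, hk, Z, hZ, rfl⟩, hEq⟩ := hmem
      rw [pcomp_equiv'] at hEq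
      obtain ⟨hdom, hval⟩ := toPMap_eq_iff'.mp hEq
      rintro w ⟨v, hv, rfl⟩
      have hv' : v ∈ X'.comap (k : V →ₗ[F] V) := (hdom ▸ hv : v ∈ Z ⊓ _).2
      have := hval v hv
      rw [this]
      exact ⟨(k : V →ₗ[F] V) v, hv', rfl⟩
    exact le_antisymm (key h g Y X hset.symm) (key g h X Y hset)
  · intro hI
    exact Set.Subset.antisymm (Lsub' hg hh hI) (Lsub' hh hg hI.symm)

end Aux3

section Aux4
variable {F V : Type*} [Field F] [AddCommGroup V] [Module F V]
variable {W : Subgroup (V ≃ₗ[F] V)} {B : Set (Submodule F V)}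

theorem self_mem_Jset' (hV : (⊤ : Submodule F V) ∈ B) (g : V ≃ₗ[F] V) (X : Submodule F V) :
    (g : V →ₗ[F] V).toPMap X ∈
      {p | ∃ α ∈ MGB (W : Set (V ≃ₗ[F] V)) B, ∃ β ∈ MGB (W : Set (V ≃ₗ[F] V)) B,
        p = pcomp α (pcomp ((g : V →ₗ[F] V).toPMap X) β)} := by
  refine ⟨_, one_top_mem' hV, _, one_top_mem' hV, ?_⟩
  rw [pcomp_equiv', one_mul, pcomp_equiv', mul_one]
  refine toPMap_eq_iff'.mpr ⟨?_, fun x _ => rfl⟩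
  simp [Submodule.comap_top]

theorem Jsub' (hmapB : ∀ X ∈ B, ∀ g ∈ W, X.map (g : V →ₗ[F] V) ∈ B)
    {g h k : V ≃ₗ[F] V} (hg : g ∈ W) (hh : h ∈ W) (hk : k ∈ W)
    {X Y : Submodule F V} (hYX : Y = X.map (k : V →ₗ[F] V)) :
    {p | ∃ α ∈ MGB (W : Set (V ≃ₗ[F] V)) B, ∃ β ∈ MGB (W : Set (V ≃ₗ[F] V)) B,
        p = pcomp α (pcomp ((g : V →ₗ[F] V).toPMap X) β)} ⊆
      {p | ∃ α ∈ MGB (W : Set (V ≃ₗ[F] V)) B, ∃ β ∈ MGB (W : Set (V ≃ₗ[F] V)) B,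
        p = pcomp α (pcomp ((h : V →ₗ[F] V).toPMap Y) β)} := by
  rintro p ⟨α, ⟨k₁, hk₁, Z, hZ, rfl⟩, β, ⟨m, hm, U, hU, rfl⟩, rfl⟩
  refine ⟨((k * k₁ : V ≃ₗ[F] V) : V →ₗ[F] V).toPMap Z,
    ⟨k * k₁, mul_mem hk hk₁, Z, hZ, rfl⟩,
    ((m * g * k⁻¹ * h⁻¹ : V ≃ₗ[F] V) : V →ₗ[F] V).toPMap
      (U.map ((h * (k * g⁻¹) : V ≃ₗ[F] V) : V →ₗ[F] V)),
    ⟨m * g * k⁻¹ * h⁻¹, mul_mem (mul_mem (mul_mem hm hg) (inv_mem hk)) (inv_mem hh),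
      _, hmapB _ hU _ (mul_mem hh (mul_mem hk (inv_mem hg))), rfl⟩, ?_⟩
  rw [pcomp_equiv', pcomp_equiv', pcomp_equiv', pcomp_equiv']
  refine toPMap_eq_iff'.mpr ⟨?_, fun x _ => ?_⟩
  · subst hYX
    congr 1
    ext v
    rw [Submodule.mem_comap, Submodule.mem_comap, Submodule.mem_inf, Submodule.mem_inf]
    refine and_congr ?_ ?_
    · rw [mem_map_equiv'']
      show (k₁ : V →ₗ[F] V) v ∈ X ↔ k.symm ((k * k₁ : V ≃ₗ[F] V) v) ∈ X
      have : k.symm ((k * k₁ : V ≃ₗ[F] V) v) = k₁ v := k.symm_apply_apply (k₁ v)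
      rw [this]
      rfl
    · rw [Submodule.mem_comap, Submodule.mem_comap, mem_map_equiv'']
      show (g : V ≃ₗ[F] V) ((k₁ : V ≃ₗ[F] V) v) ∈ U ↔
        (h * (k * g⁻¹) : V ≃ₗ[F] V).symm ((h : V ≃ₗ[F] V) ((k * k₁ : V ≃ₗ[F] V) v)) ∈ U
      have : (h * (k * g⁻¹) : V ≃ₗ[F] V).symm ((h : V ≃ₗ[F] V) ((k * k₁ : V ≃ₗ[F] V) v))
          = g (k₁ v) := by
        show g (k.symm (h.symm (h (k (k₁ v))))) = g (k₁ v)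
        rw [h.symm_apply_apply, k.symm_apply_apply]
      rw [this]
  · have hE : m * g * k⁻¹ * h⁻¹ * h * (k * k₁) = m * g * k₁ := by group
    show ((m * g * k₁ : V ≃ₗ[F] V) : V →ₗ[F] V) x
        = ((m * g * k⁻¹ * h⁻¹ * h * (k * k₁) : V ≃ₗ[F] V) : V →ₗ[F] V) x
    rw [hE]

end Aux4

/-- Green's relations on a reflection monoid `M = M(W,B)`.
For `ρ = g|_X` and `σ = h|_Y` in `M`:
(1) `ρ R σ` iff `X = Y`; (2) `ρ L σ` iff `g(X) = h(Y)`;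
(3) `ρ D σ` iff `Y` is in the `W`-orbit of `X`;
(4) if all members of `B` are finite dimensional, `ρ J σ` iff `ρ D σ`. -/
theorem greens_relations_reflection_monoid
    {F V : Type*} [Field F] [AddCommGroup V] [Module F V]
    (W : Subgroup (V ≃ₗ[F] V)) [Finite W]
    (B : Set (Submodule F V))
    (hV : (⊤ : Submodule F V) ∈ B)
    (hmapB : ∀ X ∈ B, ∀ g ∈ W, X.map (g : V →ₗ[F] V) ∈ B)
    (hinf : ∀ X ∈ B, ∀ Y ∈ B, X ⊓ Y ∈ B)
    (g h : V ≃ₗ[F] V) (hg : g ∈ W) (hh : h ∈ W)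
    (X Y : Submodule F V) (hX : X ∈ B) (hY : Y ∈ B) :
    letI M : Set (V →ₗ.[F] V) := MGB (W : Set (V ≃ₗ[F] V)) B
    letI ρ : V →ₗ.[F] V := (g : V →ₗ[F] V).toPMap X
    letI σ : V →ₗ.[F] V := (h : V →ₗ[F] V).toPMap Y
    (({p | ∃ α ∈ M, p = pcomp ρ α} = {p | ∃ α ∈ M, p = pcomp σ α}) ↔ X = Y) ∧
    (({p | ∃ α ∈ M, p = pcomp α ρ} = {p | ∃ α ∈ M, p = pcomp α σ}) ↔
        X.map (g : V →ₗ[F] V) = Y.map (h : V →ₗ[F] V)) ∧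
    ((∃ τ ∈ M, {p | ∃ α ∈ M, p = pcomp ρ α} = {p | ∃ α ∈ M, p = pcomp τ α} ∧
        {p | ∃ α ∈ M, p = pcomp α τ} = {p | ∃ α ∈ M, p = pcomp α σ}) ↔
      ∃ k ∈ W, Y = X.map (k : V →ₗ[F] V)) ∧
    ((∀ Z ∈ B, FiniteDimensional F Z) →
      (({p | ∃ α ∈ M, ∃ β ∈ M, p = pcomp α (pcomp ρ β)} =
          {p | ∃ α ∈ M, ∃ β ∈ M, p = pcomp α (pcomp σ β)}) ↔
        ∃ k ∈ W, Y = X.map (k : V →ₗ[F] V))) := by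
  refine ⟨R_iff' hV hmapB hg hh, L_iff' hV hg hh, ?_, ?_⟩
  · constructor
    · rintro ⟨τ, ⟨m, hm, Z, hZ, rfl⟩, h1, h2⟩
      have hXZ : X = Z := (R_iff' hV hmapB hg hm).mp h1
      have hIm : Z.map (m : V →ₗ[F] V) = Y.map (h : V →ₗ[F] V) := (L_iff' hV hm hh).mp h2
      subst hXZ
      refine ⟨h⁻¹ * m, mul_mem (inv_mem hh) hm, ?_⟩
      rw [map_mul_eq', hIm, map_inv_map']
    · rintro ⟨k, hk, rfl⟩
      refine ⟨((h * k : V ≃ₗ[F] V) : V →ₗ[F] V).toPMap X,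
        ⟨h * k, mul_mem hh hk, X, hX, rfl⟩,
        (R_iff' hV hmapB hg (mul_mem hh hk)).mpr rfl,
        (L_iff' hV (mul_mem hh hk) hh).mpr ?_⟩
      rw [map_mul_eq']
  · intro hfd
    constructor
    · intro hset
      have key : ∀ (g' h' : V ≃ₗ[F] V) (X' Y' : Submodule F V),
          ({p | ∃ α ∈ MGB (W : Set (V ≃ₗ[F] V)) B, ∃ β ∈ MGB (W : Set (V ≃ₗ[F] V)) B,
              p = pcomp α (pcomp ((g' : V →ₗ[F] V).toPMap X') β)} =
            {p | ∃ α ∈ MGB (W : Set (V ≃ₗ[F] V)) B, ∃ β ∈ MGB (W : Set (V ≃ₗ[F] V)) B,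
              p = pcomp α (pcomp ((h' : V →ₗ[F] V).toPMap Y') β)}) →
          ∃ k ∈ W, X'.map (k : V →ₗ[F] V) ≤ Y' := by
        intro g' h' X' Y' hs
        have hmem := self_mem_Jset' (W := W) hV g' X'
        rw [hs] at hmem
        obtain ⟨α, ⟨k₁, hk₁, Z, hZ, rfl⟩, β, ⟨m, hm, U, hU, rfl⟩, hEq⟩ := hmem
        rw [pcomp_equiv', pcomp_equiv'] at hEq
        have hdom := (toPMap_eq_iff'.mp hEq).1
        refine ⟨k₁, hk₁, ?_⟩
        rw [Submodule.map_le_iff_le_comap, hdom]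
        exact le_trans inf_le_right (Submodule.comap_mono inf_le_left)
      obtain ⟨k₁, hk₁, h1⟩ := key g h X Y hset
      obtain ⟨k₂, hk₂, h2⟩ := key h g Y X hset.symm
      haveI := hfd X hX
      haveI := hfd Y hY
      have e1 : Module.finrank F (X.map (k₁ : V →ₗ[F] V)) = Module.finrank F X :=
        k₁.finrank_map_eq X
      have e2 : Module.finrank F (Y.map (k₂ : V →ₗ[F] V)) = Module.finrank F Y :=
        k₂.finrank_map_eq Y
      have le1 : Module.finrank F (X.map (k₁ : V →ₗ[F] V)) ≤ Module.finrank F Y :=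
        Submodule.finrank_mono h1
      have le2 : Module.finrank F Y ≤ Module.finrank F X := e2 ▸ Submodule.finrank_mono h2
      have heq : Module.finrank F (X.map (k₁ : V →ₗ[F] V)) = Module.finrank F Y :=
        le_antisymm le1 (le2.trans e1.ge)
      exact ⟨k₁, hk₁, (Submodule.eq_of_le_of_finrank_eq h1 heq).symm⟩
    · rintro ⟨k, hk, hYX⟩
      have hXY : X = Y.map ((k⁻¹ : V ≃ₗ[F] V) : V →ₗ[F] V) := by
        rw [hYX, map_inv_map']
      exact Set.Subset.antisymm (Jsub' hmapB hg hh hk hYX) (Jsub' hmapB hh hg (inv_mem hk) hXY)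
end

section
/- Let F be a field, V and V' F-vector spaces, W ≤ GL(V) and W' ≤ GL(V') subgroups, B a system of subspaces for W and B' a system of subspaces for W'. Let f : V ≃ V' be an F-linear isomorphism, and for a partial linear isomorphism α of V let α^f denote the partial linear isomorphism of V' with domain f(dom α) given by α^f(v') = f(α(f⁻¹ v')). Then {α^f : α ∈ M(W,B)} = M(W',B') if and only if W' = {f∘g∘f⁻¹ : g ∈ W} and B' = {f(X) : X ∈ B}. -/
/-- Conjugation of a partial linear isomorphism `α` of `V` by a linear isomorphism
`f : V ≃ V'`: the partial linear isomorphism `α^f` of `V'` with domain `f(dom α)`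
and values `α^f v' = f (α (f⁻¹ v'))`. -/
noncomputable def pconj {F V V' : Type*} [Field F] [AddCommGroup V] [Module F V]
    [AddCommGroup V'] [Module F V'] (f : V ≃ₗ[F] V') (α : V →ₗ.[F] V) :
    V' →ₗ.[F] V' :=
  { domain := α.domain.map (f : V →ₗ[F] V')
    toFun := ((f : V →ₗ[F] V').comp α.toFun).comp
      (f.submoduleMap α.domain).symm.toLinearMap }

lemma pconj_toPMap {F V V' : Type*} [Field F] [AddCommGroup V] [Module F V]
    [AddCommGroup V'] [Module F V'] (f : V ≃ₗ[F] V') (g : V ≃ₗ[F] V) (X : Submodule F V) :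
    pconj f ((g : V →ₗ[F] V).toPMap X) =
      ((f.symm.trans (g.trans f) : V' ≃ₗ[F] V') : V' →ₗ[F] V').toPMap (X.map (f : V →ₗ[F] V')) := by
  refine LinearPMap.ext ?_ ?_
  · rfl
  · intro x hf hg
    simp only [pconj, LinearMap.toPMap, LinearPMap.mk_apply, LinearMap.comp_apply,
      LinearEquiv.coe_coe, Submodule.subtype_apply, LinearEquiv.trans_apply]
    rw [LinearEquiv.submoduleMap_symm_apply]

lemma toPMap_top_inj {F V' : Type*} [Field F] [AddCommGroup V'] [Module F V']
    {e e' : V' ≃ₗ[F] V'}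
    (h : (e : V' →ₗ[F] V').toPMap ⊤ = (e' : V' →ₗ[F] V').toPMap ⊤) : e = e' := by
  obtain ⟨-, h'⟩ := LinearPMap.ext_iff.mp h
  ext v
  have := h' (x := v) (hf := trivial) (hg := trivial)
  simpa using this

lemma map_top_equiv {F V V' : Type*} [Field F] [AddCommGroup V] [Module F V]
    [AddCommGroup V'] [Module F V'] (f : V ≃ₗ[F] V') :
    (⊤ : Submodule F V).map (f : V →ₗ[F] V') = ⊤ := by
  rw [Submodule.map_top, LinearEquiv.range]

/-- A linear isomorphism `f : V ≃ V'` carries the reflection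
monoid `M(W,B)` onto `M(W',B')` if and only if it conjugates `W` to `W'` and maps
`B` onto `B'`. -/
theorem reflection_monoid_isomorphism_iff
    {F V V' : Type*} [Field F] [AddCommGroup V] [Module F V]
    [AddCommGroup V'] [Module F V']
    (W : Subgroup (V ≃ₗ[F] V)) (W' : Subgroup (V' ≃ₗ[F] V'))
    (B : Set (Submodule F V)) (B' : Set (Submodule F V'))
    (hV : (⊤ : Submodule F V) ∈ B)
    (hmapB : ∀ X ∈ B, ∀ g ∈ W, X.map (g : V →ₗ[F] V) ∈ B)
    (hinf : ∀ X ∈ B, ∀ Y ∈ B, X ⊓ Y ∈ B)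
    (hV' : (⊤ : Submodule F V') ∈ B')
    (hmapB' : ∀ X ∈ B', ∀ g ∈ W', X.map (g : V' →ₗ[F] V') ∈ B')
    (hinf' : ∀ X ∈ B', ∀ Y ∈ B', X ⊓ Y ∈ B')
    (f : V ≃ₗ[F] V') :
    {q | ∃ α ∈ MGB (W : Set (V ≃ₗ[F] V)) B, q = pconj f α} =
        MGB (W' : Set (V' ≃ₗ[F] V')) B' ↔
      ((W' : Set (V' ≃ₗ[F] V')) = {g' | ∃ g ∈ W, g' = (f.symm.trans ((g : V ≃ₗ[F] V).trans f))} ∧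
        B' = {X' | ∃ X ∈ B, X' = X.map (f : V →ₗ[F] V')}) := by
  constructor
  · intro hEq
    constructor
    · ext g'
      simp only [SetLike.mem_coe, Set.mem_setOf_eq]
      constructor
      · intro hg'
        have hmem : ((g' : V' →ₗ[F] V').toPMap ⊤) ∈ MGB (W' : Set (V' ≃ₗ[F] V')) B' :=
          ⟨g', hg', ⊤, hV', rfl⟩
        rw [← hEq] at hmem
        obtain ⟨α, ⟨g, hg, X, hX, rfl⟩, hq⟩ := hmem
        rw [pconj_toPMap] at hq
        have hdom := congrArg LinearPMap.domain hq
        simp only [LinearMap.toPMap_domain] at hdom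
        rw [← hdom] at hq
        exact ⟨g, hg, toPMap_top_inj hq⟩
      · rintro ⟨g, hg, rfl⟩
        have hmem : pconj f ((g : V →ₗ[F] V).toPMap ⊤) ∈
            MGB (W' : Set (V' ≃ₗ[F] V')) B' := by
          rw [← hEq]
          exact ⟨_, ⟨g, hg, ⊤, hV, rfl⟩, rfl⟩
        obtain ⟨g', hg', X', hX', hq⟩ := hmem
        rw [pconj_toPMap, map_top_equiv] at hq
        have hdom := congrArg LinearPMap.domain hq
        simp only [LinearMap.toPMap_domain] at hdom
        rw [← hdom] at hq
        rw [toPMap_top_inj hq]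
        exact hg'
    · ext X'
      simp only [Set.mem_setOf_eq]
      constructor
      · intro hX'
        have hmem : (((1 : V' ≃ₗ[F] V') : V' →ₗ[F] V').toPMap X') ∈
            MGB (W' : Set (V' ≃ₗ[F] V')) B' := ⟨1, W'.one_mem, X', hX', rfl⟩
        rw [← hEq] at hmem
        obtain ⟨α, ⟨g, hg, X, hX, rfl⟩, hq⟩ := hmem
        rw [pconj_toPMap] at hq
        have hdom := congrArg LinearPMap.domain hq
        simp only [LinearMap.toPMap_domain] at hdom
        exact ⟨X, hX, hdom⟩
      · rintro ⟨X, hX, rfl⟩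
        have hmem : pconj f (((1 : V ≃ₗ[F] V) : V →ₗ[F] V).toPMap X) ∈
            MGB (W' : Set (V' ≃ₗ[F] V')) B' := by
          rw [← hEq]
          exact ⟨_, ⟨1, W.one_mem, X, hX, rfl⟩, rfl⟩
        obtain ⟨g', hg', Y', hY', hq⟩ := hmem
        rw [pconj_toPMap] at hq
        have hdom := congrArg LinearPMap.domain hq
        simp only [LinearMap.toPMap_domain] at hdom
        rw [hdom]
        exact hY'
  · rintro ⟨hW', hB'⟩
    ext q
    simp only [Set.mem_setOf_eq, MGB]
    constructor
    · rintro ⟨α, ⟨g, hg, X, hX, rfl⟩, rfl⟩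
      refine ⟨f.symm.trans ((g : V ≃ₗ[F] V).trans f), ?_, X.map (f : V →ₗ[F] V'), ?_,
        pconj_toPMap f g X⟩
      · rw [hW']
        exact ⟨g, hg, rfl⟩
      · rw [hB']
        exact ⟨X, hX, rfl⟩
    · rintro ⟨g', hg', X', hX', rfl⟩
      rw [hW'] at hg'
      obtain ⟨g, hg, rfl⟩ := hg'
      rw [hB'] at hX'
      obtain ⟨X, hX, rfl⟩ := hX'
      exact ⟨(g : V →ₗ[F] V).toPMap X, ⟨g, hg, X, hX, rfl⟩, (pconj_toPMap f g X).symm⟩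
end

section
/- Let n ≥ 1 and V = Fin n → ℝ, and let the symmetric group act on subspaces of V by X ↦ P_σ(X) where (P_σ v)(i) = v(σ⁻¹ i). For set partitions Λ, Λ' of Fin n, the subspaces X(Λ) and X(Λ') lie in the same orbit of this action if and only if Λ and Λ' have the same multiset of block sizes. Moreover, if Λ has block-size multiset λ, then the orbit of X(Λ) has cardinality n!/b_λ. -/
/-- The subspace `X(Λ)` of vectors constant on the blocks of the set partition
(equivalence relation) `Λ`. -/
def partitionSubspace {n : ℕ} (Λ : Setoid (Fin n)) : Submodule ℝ (Fin n → ℝ) where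
  carrier := {v | ∀ i j, Λ.r i j → v i = v j}
  add_mem' := by
    intro a b ha hb i j hij
    simp [ha i j hij, hb i j hij]
  zero_mem' := fun i j _ => rfl
  smul_mem' := by
    intro c v hv i j hij
    simp [hv i j hij]

open Classical in
/-- The multiset of block sizes of a set partition (equivalence relation) on a
finite type. -/
noncomputable def blockSizes {α : Type*} [Fintype α] (Λ : Setoid α) : Multiset ℕ :=
  ((Finset.univ.image fun i : α => {j | Λ.r i j}).val).map fun s => s.ncard

/-- For a multiset of (positive) part sizes `λ` with `b_i` parts equal to `i`,
`b_λ = ∏_i b_i! (i!)^{b_i}`. -/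
def bLambda (lam : Multiset ℕ) : ℕ :=
  lam.toFinset.prod fun i => (lam.count i).factorial * i.factorial ^ lam.count i

/-- The permutation map `P_σ`, `(P_σ v) i = v (σ⁻¹ i)`, as a linear automorphism. -/
noncomputable def permL {n : ℕ} (σ : Equiv.Perm (Fin n)) :
    (Fin n → ℝ) ≃ₗ[ℝ] (Fin n → ℝ) where
  toFun v := fun i => v (σ⁻¹ i)
  invFun v := fun i => v (σ i)
  map_add' a b := rfl
  map_smul' c v := rfl
  left_inv v := funext fun i => by simp
  right_inv v := funext fun i => by simp

lemma mem_pS {n : ℕ} {Λ : Setoid (Fin n)} {v : Fin n → ℝ} :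
    v ∈ partitionSubspace Λ ↔ ∀ i j, Λ.r i j → v i = v j := Iff.rfl

lemma pS_rel_iff {n : ℕ} (Λ : Setoid (Fin n)) (i j : Fin n) :
    Λ.r i j ↔ ∀ v ∈ partitionSubspace Λ, v i = v j := by
  constructor
  · exact fun h v hv => hv i j h
  · intro h
    classical
    have hv : (fun k => if Λ.r i k then (1:ℝ) else 0) ∈ partitionSubspace Λ := by
      intro a b hab
      have : Λ.r i a ↔ Λ.r i b :=
        ⟨fun h' => Λ.iseqv.trans h' hab, fun h' => Λ.iseqv.trans h' (Λ.iseqv.symm hab)⟩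
      simp only [this]
    have := h _ hv
    simp only [Setoid.refl, if_pos (Λ.iseqv.refl i)] at this
    by_contra hij
    rw [if_neg hij] at this
    norm_num at this

lemma pS_injective {n : ℕ} : Function.Injective (partitionSubspace (n := n)) := by
  intro Λ Λ' h
  ext i j
  rw [pS_rel_iff, pS_rel_iff, h]

lemma map_pS {n : ℕ} (σ : Equiv.Perm (Fin n)) (Λ : Setoid (Fin n)) :
    (partitionSubspace Λ).map (permL σ : (Fin n → ℝ) →ₗ[ℝ] (Fin n → ℝ)) =
      partitionSubspace (Setoid.comap (⇑σ⁻¹) Λ) := by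
  ext v
  simp only [Submodule.mem_map]
  constructor
  · rintro ⟨w, hw, rfl⟩ i j hij
    exact hw _ _ hij
  · intro hv
    refine ⟨fun i => v (σ i), fun i j hij => ?_, ?_⟩
    · exact hv (σ i) (σ j) (show Λ.r (σ⁻¹ (σ i)) (σ⁻¹ (σ j)) by simpa using hij)
    · show (fun i => (fun i => v (σ i)) (σ⁻¹ i)) = v
      funext i; simp

lemma count_univ_map {Q : Type*} [Fintype Q] (c : Q → ℕ) (i : ℕ) :
    ((Finset.univ : Finset Q).val.map c).count i = Fintype.card {x : Q // c x = i} := by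
  classical
  rw [Multiset.count_map, Fintype.card_subtype]
  have h2 : Multiset.filter (fun a => i = c a) (Finset.univ : Finset Q).val
      = Multiset.filter (fun x => c x = i) (Finset.univ : Finset Q).val :=
    Multiset.filter_congr (fun x _ => eq_comm)
  rw [h2]
  rfl

lemma bLambda_map {Q : Type*} [Fintype Q] (c : Q → ℕ) :
    bLambda ((Finset.univ : Finset Q).val.map c) =
      (∏ i ∈ Finset.univ.image c, (Fintype.card {x : Q // c x = i}).factorial) *
      ∏ x : Q, (c x).factorial := by
  classical
  unfold bLambda
  rw [Multiset.toFinset_map, Finset.val_toFinset]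
  rw [Finset.prod_mul_distrib]
  congr 1
  · exact Finset.prod_congr rfl fun i _ => by rw [count_univ_map]
  · rw [← Finset.prod_fiberwise_of_maps_to
      (fun x _ => Finset.mem_image_of_mem c (Finset.mem_univ x)) (fun x => (c x).factorial)]
    apply Finset.prod_congr rfl
    intro i _
    rw [count_univ_map]
    rw [Fintype.card_subtype]
    have h3 : ∏ x ∈ Finset.univ.filter (fun x => c x = i), (c x).factorial
        = ∏ x ∈ Finset.univ.filter (fun x => c x = i), i.factorial :=
      Finset.prod_congr rfl fun x hx => by rw [(Finset.mem_filter.mp hx).2]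
    rw [h3, Finset.prod_const]

section setoids
variable {n : ℕ} (Λ : Setoid (Fin n))

noncomputable instance : Fintype (Quotient Λ) := by classical exact Quotient.fintype Λ

noncomputable def qcnt : Quotient Λ → ℕ := fun x => Nat.card {j // Quotient.mk Λ j = x}

lemma equiv_of_fiber_card {α β ι : Type*} [Fintype α] [Fintype β] (f : α → ι) (g : β → ι)
    (h : ∀ i, Nat.card {a // f a = i} = Nat.card {b // g b = i}) :
    ∃ e : α ≃ β, ∀ a, g (e a) = f a := by
  classical
  have h' : ∀ i, Fintype.card {a // f a = i} = Fintype.card {b // g b = i} := fun i => by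
    rw [← Nat.card_eq_fintype_card, ← Nat.card_eq_fintype_card]; exact h i
  refine ⟨(Equiv.sigmaFiberEquiv f).symm.trans
    ((Equiv.sigmaCongrRight fun i => Fintype.equivOfCardEq (h' i)).trans
      (Equiv.sigmaFiberEquiv g)), fun a => ?_⟩
  simp only [Equiv.trans_apply, Equiv.sigmaFiberEquiv, Equiv.sigmaCongrRight,
    Equiv.coe_fn_symm_mk, Equiv.coe_fn_mk]
  exact (Fintype.equivOfCardEq (h' (f a)) ⟨a, rfl⟩).2

lemma blockSizes_eq_map_qcnt :
    blockSizes Λ = (Finset.univ : Finset (Quotient Λ)).val.map (qcnt Λ) := by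
  classical
  have hB : (fun i : Fin n => {j | Λ.r i j}) =
      (fun x : Quotient Λ => {j | Quotient.mk Λ j = x}) ∘ (Quotient.mk Λ) := by
    funext i
    ext j
    simp only [Set.mem_setOf_eq, Function.comp_apply, Quotient.eq]
    exact ⟨fun h => Λ.iseqv.symm h, fun h => Λ.iseqv.symm h⟩
  have hinj : Function.Injective (fun x : Quotient Λ => {j | Quotient.mk Λ j = x}) := by
    intro x y hxy
    obtain ⟨a, rfl⟩ := Quotient.exists_rep x
    have : a ∈ {j | Quotient.mk Λ j = y} := by
      simp only at hxy
      rw [← hxy]; exact rfl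
    exact this
  have h1 : (Finset.univ.image fun i : Fin n => {j | Λ.r i j}) =
      Finset.univ.image (fun x : Quotient Λ => {j | Quotient.mk Λ j = x}) := by
    rw [hB, ← Finset.image_image, Finset.image_univ_of_surjective Quotient.exists_rep]
  unfold blockSizes
  rw [h1, Finset.image_val_of_injOn (hinj.injOn)]
  rw [Multiset.map_map]
  apply Multiset.map_congr rfl
  intro x _
  simp only [Function.comp_apply, qcnt]
  rw [← Nat.card_coe_set_eq]
  rfl

lemma blockSizes_eq_of_equiv {Λ' : Setoid (Fin n)} (e : Quotient Λ ≃ Quotient Λ')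
    (he : ∀ x, qcnt Λ' (e x) = qcnt Λ x) : blockSizes Λ = blockSizes Λ' := by
  rw [blockSizes_eq_map_qcnt, blockSizes_eq_map_qcnt]
  have : (Finset.univ : Finset (Quotient Λ')).val = (Finset.univ : Finset (Quotient Λ)).val.map e :=
    by rw [← Finset.univ_map_equiv_to_embedding e, Finset.map_val]; rfl
  rw [this, Multiset.map_map]
  exact (Multiset.map_congr rfl fun x _ => (he x).symm)

lemma count_blockSizes (i : ℕ) :
    (blockSizes Λ).count i = Nat.card {x : Quotient Λ // qcnt Λ x = i} := by
  classical
  rw [blockSizes_eq_map_qcnt, Multiset.count_map, Nat.card_eq_fintype_card,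
    Fintype.card_subtype]
  have h2 : Multiset.filter (fun a => i = qcnt Λ a) (Finset.univ : Finset (Quotient Λ)).val
      = Multiset.filter (fun x => qcnt Λ x = i) (Finset.univ : Finset (Quotient Λ)).val :=
    Multiset.filter_congr (fun x _ => eq_comm)
  rw [h2]
  rfl

lemma qcnt_comap (σ : Equiv.Perm (Fin n)) (x : Quotient (Setoid.comap ⇑σ Λ)) :
    qcnt Λ (Quotient.congr σ (fun a b => (Setoid.comap_rel σ Λ a b)) x) = qcnt (Setoid.comap ⇑σ Λ) x := by
  induction x using Quotient.ind with
  | _ a =>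
    apply Nat.card_congr
    refine (Equiv.subtypeEquiv σ fun j => ?_).symm
    rw [Quotient.congr_mk]
    constructor
    · intro h
      rw [Quotient.eq] at h ⊢
      exact h
    · intro h
      rw [Quotient.eq] at h ⊢
      exact h

lemma blockSizes_comap (σ : Equiv.Perm (Fin n)) :
    blockSizes (Setoid.comap ⇑σ Λ) = blockSizes Λ :=
  blockSizes_eq_of_equiv _ (Quotient.congr σ (fun a b => (Setoid.comap_rel σ Λ a b))) (qcnt_comap Λ σ)

instance : MulAction (Equiv.Perm (Fin n)) (Setoid (Fin n)) where
  smul σ Λ := Setoid.comap ⇑σ⁻¹ Λ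
  one_smul Λ := Setoid.ext fun a b => by
    show (Setoid.comap ⇑(1 : Equiv.Perm (Fin n))⁻¹ Λ) a b ↔ Λ a b
    rw [Setoid.comap_rel]; rfl
  mul_smul σ τ Λ := Setoid.ext fun a b => by
    show (Setoid.comap ⇑(σ * τ)⁻¹ Λ) a b ↔ (Setoid.comap ⇑σ⁻¹ (Setoid.comap ⇑τ⁻¹ Λ)) a b
    rw [Setoid.comap_rel, Setoid.comap_rel, Setoid.comap_rel]
    exact Iff.rfl

lemma smul_setoid_def (σ : Equiv.Perm (Fin n)) (Λ : Setoid (Fin n)) :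
    σ • Λ = Setoid.comap ⇑σ⁻¹ Λ := rfl

lemma mem_stab_iff {σ : Equiv.Perm (Fin n)} :
    σ ∈ MulAction.stabilizer (Equiv.Perm (Fin n)) Λ ↔ ∀ a b, Λ a b ↔ Λ (σ a) (σ b) := by
  rw [MulAction.mem_stabilizer_iff, smul_setoid_def]
  constructor
  · intro h a b
    have := Setoid.ext_iff.mp h (σ a) (σ b)
    rw [Setoid.comap_rel] at this
    simpa using this
  · intro h
    apply Setoid.ext fun a b => ?_
    rw [Setoid.comap_rel]
    simpa using h (σ⁻¹ a) (σ⁻¹ b)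

/-- The induced permutation of the quotient. -/
noncomputable def stabPerm (σ : MulAction.stabilizer (Equiv.Perm (Fin n)) Λ) :
    Equiv.Perm (Quotient Λ) :=
  Quotient.congr (σ : Equiv.Perm (Fin n)) fun a b => (mem_stab_iff Λ).mp σ.2 a b

lemma stabPerm_mk (σ : MulAction.stabilizer (Equiv.Perm (Fin n)) Λ) (a : Fin n) :
    stabPerm Λ σ (Quotient.mk Λ a) = Quotient.mk Λ ((σ : Equiv.Perm (Fin n)) a) := rfl

noncomputable def stabHom :
    MulAction.stabilizer (Equiv.Perm (Fin n)) Λ →* Equiv.Perm (Quotient Λ) where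
  toFun := stabPerm Λ
  map_one' := by
    ext x
    induction x using Quotient.ind with
    | _ a => rfl
  map_mul' σ τ := by
    ext x
    induction x using Quotient.ind with
    | _ a => rfl

lemma ker_card : Nat.card (stabHom Λ).ker =
    ∏ x : Quotient Λ, (qcnt Λ x).factorial := by
  classical
  have h1 : ∀ x : Quotient Λ, qcnt Λ x = Fintype.card {a // Quotient.mk Λ a = x} := fun x => by
    rw [qcnt, Nat.card_eq_fintype_card]
  rw [Finset.prod_congr rfl fun x _ => by rw [h1 x]]
  rw [← DomMulAct.stabilizer_card (Quotient.mk Λ)]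
  rw [← Nat.card_eq_fintype_card]
  apply Nat.card_congr
  have hmem : ∀ g : {g : Equiv.Perm (Fin n) // Quotient.mk Λ ∘ ⇑g = Quotient.mk Λ},
      g.1 ∈ MulAction.stabilizer (Equiv.Perm (Fin n)) Λ := by
    intro g
    rw [mem_stab_iff]
    intro a b
    have ha := congrFun g.2 a
    have hb := congrFun g.2 b
    simp only [Function.comp_apply] at ha hb
    constructor
    · intro h'
      exact Quotient.eq.mp (ha.trans ((Quotient.eq.mpr h').trans hb.symm))
    · intro h'
      exact Quotient.eq.mp ((ha.symm.trans (Quotient.eq.mpr h')).trans hb)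
  have hker : ∀ g : {g : Equiv.Perm (Fin n) // Quotient.mk Λ ∘ ⇑g = Quotient.mk Λ},
      (⟨g.1, hmem g⟩ : MulAction.stabilizer (Equiv.Perm (Fin n)) Λ) ∈ (stabHom Λ).ker := by
    intro g
    rw [MonoidHom.mem_ker]
    ext x
    induction x using Quotient.ind with
    | _ a =>
      have ha := congrFun g.2 a
      simp only [Function.comp_apply] at ha
      simp only [stabHom, MonoidHom.coe_mk, OneHom.coe_mk, stabPerm_mk, Equiv.Perm.coe_one, id_eq]
      rw [ha]
  refine ⟨fun σ => ⟨σ.1.1, ?_⟩, fun g => ⟨⟨g.1, hmem g⟩, hker g⟩, fun σ => rfl, fun g => rfl⟩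
  funext a
  have h2 := congrArg (fun (e : Equiv.Perm (Quotient Λ)) => e (Quotient.mk Λ a))
    (MonoidHom.mem_ker.mp σ.2)
  simpa [stabHom, stabPerm_mk] using h2

lemma range_carrier : ((stabHom Λ).range : Set (Equiv.Perm (Quotient Λ))) =
    {τ : Equiv.Perm (Quotient Λ) | qcnt Λ ∘ τ = qcnt Λ} := by
  ext τ
  simp only [SetLike.mem_coe, MonoidHom.mem_range, Set.mem_setOf_eq]
  constructor
  · rintro ⟨σ, rfl⟩
    funext x
    induction x using Quotient.ind with
    | _ a =>
      simp only [Function.comp_apply, stabHom, MonoidHom.coe_mk, OneHom.coe_mk, stabPerm_mk]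
      apply Nat.card_congr
      refine Equiv.subtypeEquiv ((σ : Equiv.Perm (Fin n))⁻¹ : Equiv.Perm (Fin n)) fun j => ?_
      have key := (mem_stab_iff Λ).mp σ.2
      constructor
      · intro h'
        have := Quotient.eq.mp h'
        refine Quotient.eq.mpr ?_
        have h2 := (key ((σ : Equiv.Perm (Fin n))⁻¹ j) a).mpr
        simpa using h2 (by simpa using this)
      · intro h'
        have := Quotient.eq.mp h'
        refine Quotient.eq.mpr ?_
        have h2 := (key ((σ : Equiv.Perm (Fin n))⁻¹ j) a).mp this
        simpa using h2
  · intro hτ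
    have hf : ∀ x, Nat.card {a : Fin n // τ (Quotient.mk Λ a) = x} =
        Nat.card {a : Fin n // Quotient.mk Λ a = x} := by
      intro x
      have e1 : {a : Fin n // τ (Quotient.mk Λ a) = x} ≃ {a : Fin n // Quotient.mk Λ a = τ⁻¹ x} :=
        Equiv.subtypeEquiv (Equiv.refl _) fun a => by
          simp [Equiv.apply_eq_iff_eq_symm_apply, Equiv.Perm.inv_def]
      rw [Nat.card_congr e1]
      have h2 := congrFun hτ (τ⁻¹ x)
      simp only [Function.comp_apply, Equiv.Perm.inv_def, Equiv.apply_symm_apply] at h2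
      exact h2.symm
    obtain ⟨e, he⟩ := equiv_of_fiber_card (fun a => τ (Quotient.mk Λ a)) (Quotient.mk Λ) hf
    have hm : e ∈ MulAction.stabilizer (Equiv.Perm (Fin n)) Λ := by
      rw [mem_stab_iff]
      intro a b
      constructor
      · intro h'
        refine Quotient.eq.mp ?_
        rw [he a, he b, Quotient.eq.mpr h']
      · intro h'
        have : τ (Quotient.mk Λ a) = τ (Quotient.mk Λ b) := by
          rw [← he a, ← he b]; exact Quotient.eq.mpr h'
        exact Quotient.eq.mp (τ.injective this)
    refine ⟨⟨e, hm⟩, ?_⟩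
    ext x
    induction x using Quotient.ind with
    | _ a =>
      simp only [stabHom, MonoidHom.coe_mk, OneHom.coe_mk, stabPerm_mk]
      exact he a

lemma range_card : Nat.card (stabHom Λ).range =
    Nat.card {τ : Equiv.Perm (Quotient Λ) // qcnt Λ ∘ τ = qcnt Λ} := by
  apply Nat.card_congr
  exact (Equiv.setCongr (range_carrier Λ))

lemma stab_card : Nat.card (MulAction.stabilizer (Equiv.Perm (Fin n)) Λ) =
    (∏ i ∈ Finset.univ.image (qcnt Λ),
      (Fintype.card {x : Quotient Λ // qcnt Λ x = i}).factorial) *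
    ∏ x : Quotient Λ, (qcnt Λ x).factorial := by
  classical
  rw [Subgroup.card_eq_card_quotient_mul_card_subgroup (stabHom Λ).ker]
  rw [Nat.card_congr (QuotientGroup.quotientKerEquivRange (stabHom Λ)).toEquiv]
  rw [range_card, ker_card]
  congr 1
  rw [Nat.card_eq_fintype_card, DomMulAct.stabilizer_card' (qcnt Λ)]

end setoids

/-- Two subspaces `X(Λ)`, `X(Λ')` lie in the same orbit of the
symmetric group acting on subspaces of `ℝⁿ` by `X ↦ P_σ(X)` if and only if `Λ`
and `Λ'` have the same multiset of block sizes; the orbit of `X(Λ)` has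
cardinality `n!/b_λ`. -/
theorem partition_subspace_orbits (n : ℕ) (hn : 1 ≤ n) (Λ Λ' : Setoid (Fin n)) :
    ((∃ σ : Equiv.Perm (Fin n),
        partitionSubspace Λ' = (partitionSubspace Λ).map (permL σ : (Fin n → ℝ) →ₗ[ℝ] (Fin n → ℝ))) ↔
      blockSizes Λ = blockSizes Λ') ∧
    Nat.card {Z : Submodule ℝ (Fin n → ℝ) |
        ∃ σ : Equiv.Perm (Fin n),
          Z = (partitionSubspace Λ).map (permL σ : (Fin n → ℝ) →ₗ[ℝ] (Fin n → ℝ))} =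
      n.factorial / bLambda (blockSizes Λ) := by
  classical
  constructor
  · constructor
    · rintro ⟨σ, hσ⟩
      rw [map_pS] at hσ
      have h1 := pS_injective hσ
      rw [h1, blockSizes_comap]
    · intro hbs
      -- quotient equiv preserving counts
      have hcnt : ∀ i, Nat.card {x : Quotient Λ // qcnt Λ x = i}
          = Nat.card {x : Quotient Λ' // qcnt Λ' x = i} := by
        intro i
        rw [← count_blockSizes, ← count_blockSizes, hbs]
      obtain ⟨e, he⟩ := equiv_of_fiber_card (qcnt Λ) (qcnt Λ') hcnt
      -- lift to a permutation of `Fin n`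
      have hfib : ∀ x : Quotient Λ,
          Nat.card {a : Fin n // e.symm (Quotient.mk Λ' a) = x}
            = Nat.card {a : Fin n // Quotient.mk Λ a = x} := by
        intro x
        have e1 : {a : Fin n // e.symm (Quotient.mk Λ' a) = x}
            ≃ {a : Fin n // Quotient.mk Λ' a = e x} :=
          Equiv.subtypeEquiv (Equiv.refl _) fun a => by
            simp [Equiv.symm_apply_eq]
        rw [Nat.card_congr e1]
        exact he x
      obtain ⟨σ', hσ'⟩ := equiv_of_fiber_card
        (fun a => e.symm (Quotient.mk Λ' a)) (Quotient.mk Λ) hfib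
      have hΛ' : Λ' = Setoid.comap ⇑σ' Λ := by
        apply Setoid.ext fun a b => ?_
        rw [Setoid.comap_rel]
        constructor
        · intro h'
          have h2 : (Quotient.mk Λ' a) = (Quotient.mk Λ' b) := Quotient.eq.mpr h'
          have h3 : Quotient.mk Λ (σ' a) = Quotient.mk Λ (σ' b) := by
            rw [hσ' a, hσ' b, h2]
          exact (@Quotient.eq _ Λ (σ' a) (σ' b)).mp h3
        · intro h'
          have h2 : e.symm (Quotient.mk Λ' a) = e.symm (Quotient.mk Λ' b) := by
            rw [← hσ' a, ← hσ' b]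
            exact Quotient.eq.mpr h'
          exact Quotient.eq.mp (e.symm.injective h2)
      refine ⟨σ'⁻¹, ?_⟩
      rw [map_pS, inv_inv]
      exact congrArg partitionSubspace hΛ'
  · have hS : {Z : Submodule ℝ (Fin n → ℝ) | ∃ σ : Equiv.Perm (Fin n),
        Z = (partitionSubspace Λ).map (permL σ : (Fin n → ℝ) →ₗ[ℝ] (Fin n → ℝ))}
        = partitionSubspace '' (MulAction.orbit (Equiv.Perm (Fin n)) Λ) := by
      ext Z
      simp only [Set.mem_setOf_eq, Set.mem_image, MulAction.mem_orbit_iff]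
      constructor
      · rintro ⟨σ, rfl⟩
        exact ⟨σ • Λ, ⟨σ, rfl⟩, (map_pS σ Λ).symm⟩
      · rintro ⟨Λ'', ⟨σ, rfl⟩, rfl⟩
        exact ⟨σ, (map_pS σ Λ).symm⟩
    rw [hS]
    have hcard : Nat.card ↥(partitionSubspace '' (MulAction.orbit (Equiv.Perm (Fin n)) Λ))
        = Nat.card ↥(MulAction.orbit (Equiv.Perm (Fin n)) Λ) := by
      rw [Nat.card_coe_set_eq, Nat.card_coe_set_eq,
        Set.ncard_image_of_injective _ pS_injective]
    rw [hcard]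
    have horb := Nat.card_congr
      (MulAction.orbitProdStabilizerEquivGroup (Equiv.Perm (Fin n)) Λ)
    rw [Nat.card_prod] at horb
    have hgrp : Nat.card (Equiv.Perm (Fin n)) = n.factorial := by
      rw [Nat.card_eq_fintype_card, Fintype.card_perm, Fintype.card_fin]
    have hstab : Nat.card (MulAction.stabilizer (Equiv.Perm (Fin n)) Λ)
        = bLambda (blockSizes Λ) := by
      rw [stab_card, blockSizes_eq_map_qcnt, bLambda_map]
    rw [hstab, hgrp] at horb
    have hbpos : 0 < bLambda (blockSizes Λ) := by
      apply Finset.prod_pos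
      intro i _
      exact Nat.mul_pos (Nat.factorial_pos _) (pow_pos (Nat.factorial_pos _) _)
    rw [← horb, Nat.mul_div_cancel _ hbpos]
end
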